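/- arXiv:2009.10717 — 6 statements merged into one kernel-verified Lean document; each statement's English description precedes it below -/
import Mathlib

section
/- For any ADSAGA state, the expectation over one step satisfies E[x⁺] = x − η·p_min·v, and E[Σ_{j=1}^m u⁺_j + m·ᾱ⁺] = v − p_min·( v − (m/n)·Σ_{i=1}^n ∇f_i(x) ). (Unbiased Trajectory Lemma.) -/
open Finset
open scoped RealInnerProductSpace BigOperators

noncomputable section

/-- The state of the ADSAGA algorithm. -/
structure AdsagaState (d n m : ℕ) where
  x : EuclideanSpace ℝ (Fin d)
  u : Fin m → EuclideanSpace ℝ (Fin d)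
  g : Fin m → EuclideanSpace ℝ (Fin d)
  beta : Fin m → EuclideanSpace ℝ (Fin d)
  alpha : Fin n → EuclideanSpace ℝ (Fin d)
  idx : Fin m → Fin n

namespace AdsagaState

variable {d n m : ℕ}

/-- `h_j = g_j - β_j`. -/
def hvec (S : AdsagaState d n m) (j : Fin m) : EuclideanSpace ℝ (Fin d) :=
  S.g j - S.beta j

/-- `ᾱ = (1/n) ∑ i, α_i`. -/
def abar (S : AdsagaState d n m) : EuclideanSpace ℝ (Fin d) :=
  ((1 : ℝ) / n) • ∑ i, S.alpha i

/-- `v = ∑ j, u_j + m • ᾱ`. -/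
def v (S : AdsagaState d n m) : EuclideanSpace ℝ (Fin d) :=
  (∑ j, S.u j) + (m : ℝ) • S.abar

/-- One ADSAGA step with choice `(j, i)` (where `i` is meant to lie in `S_j`). -/
def step (gradf : Fin n → EuclideanSpace ℝ (Fin d) → EuclideanSpace ℝ (Fin d))
    (p : Fin m → ℝ) (pmin η : ℝ) (S : AdsagaState d n m) (j : Fin m) (i : Fin n) :
    AdsagaState d n m where
  x := S.x - (η * pmin / p j) • (S.u j + S.abar)
  alpha := Function.update S.alpha (S.idx j) (S.g j)
  g := Function.update S.g j (gradf i S.x)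
  beta := Function.update S.beta j (if i = S.idx j then S.g j else S.alpha i)
  u := Function.update S.u j
    ((1 - pmin / p j) • S.u j
      + (pmin / p j) • (gradf i S.x - (if i = S.idx j then S.g j else S.alpha i))
      - ((m : ℝ) / n * (1 - pmin / p j)) • S.hvec j)
  idx := Function.update S.idx j i

/-- Run `k` ADSAGA steps, with the `t`-th choice given by the index `ω t` (on machine `J (ω t)`). -/
def run (gradf : Fin n → EuclideanSpace ℝ (Fin d) → EuclideanSpace ℝ (Fin d))
    (p : Fin m → ℝ) (pmin η : ℝ) (J : Fin n → Fin m) (S0 : AdsagaState d n m) :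
    (k : ℕ) → (Fin k → Fin n) → AdsagaState d n m
  | 0, _ => S0
  | (k + 1), ω =>
      step gradf p pmin η (run gradf p pmin η J S0 k (fun t => ω t.castSucc))
        (J (ω (Fin.last k))) (ω (Fin.last k))

end AdsagaState

/-- `φ1 = 4mη (f(x) - f(x^*))` where `f` is the average of the `f_i`. -/
def phi1 (f : Fin n → EuclideanSpace ℝ (Fin d) → ℝ) (xstar : EuclideanSpace ℝ (Fin d))
    {m : ℕ} (η : ℝ) (S : AdsagaState d n m) : ℝ :=
  4 * (m : ℝ) * η * ((((1 : ℝ) / n) * ∑ i, f i S.x) - (((1 : ℝ) / n) * ∑ i, f i xstar))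

/-- `φ2 = ‖y‖² - 2η⟪y, v⟫ + 2η²‖v‖²`. -/
def phi2 (xstar : EuclideanSpace ℝ (Fin d)) {n m : ℕ} (η : ℝ) (S : AdsagaState d n m) : ℝ :=
  ‖S.x - xstar‖ ^ 2 - 2 * η * ⟪S.x - xstar, S.v⟫ + 2 * η ^ 2 * ‖S.v‖ ^ 2

/-- `φ3 = η² c3 ∑ j, (pmin / p j) ‖g*_j‖²`. -/
def phi3 (gradf : Fin n → EuclideanSpace ℝ (Fin d) → EuclideanSpace ℝ (Fin d))
    (xstar : EuclideanSpace ℝ (Fin d)) {m : ℕ} (p : Fin m → ℝ) (pmin η c3 : ℝ)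
    (S : AdsagaState d n m) : ℝ :=
  η ^ 2 * c3 * ∑ j, (pmin / p j) * ‖S.g j - gradf (S.idx j) xstar‖ ^ 2

/-- `φ4 = η² c4 (2 ∑ i, (pmin / p (J i)) ‖α*_i‖² - ∑ j, (pmin / p j) ‖β*_j‖²)`. -/
def phi4 (gradf : Fin n → EuclideanSpace ℝ (Fin d) → EuclideanSpace ℝ (Fin d))
    (xstar : EuclideanSpace ℝ (Fin d)) {m : ℕ} (J : Fin n → Fin m) (p : Fin m → ℝ)
    (pmin η c4 : ℝ) (S : AdsagaState d n m) : ℝ :=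
  η ^ 2 * c4 * ((2 * ∑ i, (pmin / p (J i)) * ‖S.alpha i - gradf i xstar‖ ^ 2)
    - ∑ j, (pmin / p j) * ‖S.beta j - gradf (S.idx j) xstar‖ ^ 2)

/-- `φ5 = η² c5 ∑ j, ‖u_j‖²`. -/
def phi5 {d n m : ℕ} (η c5 : ℝ) (S : AdsagaState d n m) : ℝ :=
  η ^ 2 * c5 * ∑ j, ‖S.u j‖ ^ 2

/-- The total potential `φ = φ1 + φ2 + φ3 + φ4 + φ5`. -/
def phiTot (f : Fin n → EuclideanSpace ℝ (Fin d) → ℝ)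
    (gradf : Fin n → EuclideanSpace ℝ (Fin d) → EuclideanSpace ℝ (Fin d))
    (xstar : EuclideanSpace ℝ (Fin d)) {m : ℕ} (J : Fin n → Fin m) (p : Fin m → ℝ)
    (pmin η c3 c4 c5 : ℝ) (S : AdsagaState d n m) : ℝ :=
  phi1 f xstar η S + phi2 xstar η S + phi3 gradf xstar p pmin η c3 S
    + phi4 gradf xstar J p pmin η c4 S + phi5 η c5 S

end

section AuxUnbiased

lemma adsaga_sum_update {ι M : Type*} [DecidableEq ι] [AddCommGroup M] {s : Finset ι} {a : ι}
    (ha : a ∈ s) (f : ι → M) (b : M) :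
    ∑ i ∈ s, Function.update f a b i = (∑ i ∈ s, f i) + (b - f a) := by
  rw [Finset.sum_update_of_mem ha, Finset.sum_sdiff_eq_sub (Finset.singleton_subset_iff.2 ha)]
  simp
  abel

lemma adsaga_sum_comp {n m : ℕ} {M : Type*} [AddCommGroup M] (J : Fin n → Fin m)
    (hpart : ∀ j, (Finset.univ.filter (fun i => J i = j)).card = n / m)
    (F : Fin m → M) : ∑ i, F (J i) = ∑ j, (n / m) • F j := by
  rw [← Finset.sum_fiberwise Finset.univ J (fun i => F (J i))]
  refine Finset.sum_congr rfl fun j _ => ?_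
  rw [Finset.sum_congr rfl (fun i hi => by rw [(Finset.mem_filter.1 hi).2]),
    Finset.sum_const, hpart]

lemma adsaga_sum_comp' {n m : ℕ} {M : Type*} [AddCommGroup M] [Module ℝ M] (J : Fin n → Fin m)
    (hpart : ∀ j, (Finset.univ.filter (fun i => J i = j)).card = n / m)
    (F : Fin m → M) : ∑ i, F (J i) = (((n / m : ℕ) : ℝ)) • ∑ j, F j := by
  rw [adsaga_sum_comp J hpart F, Finset.smul_sum]
  exact Finset.sum_congr rfl fun j _ => (Nat.cast_smul_eq_nsmul ℝ _ _).symm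

lemma adsaga_step_x {d n m : ℕ}
    (gradf : Fin n → EuclideanSpace ℝ (Fin d) → EuclideanSpace ℝ (Fin d))
    (p : Fin m → ℝ) (pmin η : ℝ) (S : AdsagaState d n m) (j : Fin m) (i : Fin n) :
    (AdsagaState.step gradf p pmin η S j i).x
      = S.x - (η * pmin / p j) • (S.u j + S.abar) := rfl

lemma adsaga_step_u {d n m : ℕ}
    (gradf : Fin n → EuclideanSpace ℝ (Fin d) → EuclideanSpace ℝ (Fin d))
    (p : Fin m → ℝ) (pmin η : ℝ) (S : AdsagaState d n m) (j : Fin m) (i : Fin n) :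
    (AdsagaState.step gradf p pmin η S j i).u
      = Function.update S.u j
          ((1 - pmin / p j) • S.u j
            + (pmin / p j) • (gradf i S.x - (if i = S.idx j then S.g j else S.alpha i))
            - ((m : ℝ) / n * (1 - pmin / p j)) • S.hvec j) := rfl

lemma adsaga_step_alpha {d n m : ℕ}
    (gradf : Fin n → EuclideanSpace ℝ (Fin d) → EuclideanSpace ℝ (Fin d))
    (p : Fin m → ℝ) (pmin η : ℝ) (S : AdsagaState d n m) (j : Fin m) (i : Fin n) :
    (AdsagaState.step gradf p pmin η S j i).alpha
      = Function.update S.alpha (S.idx j) (S.g j) := rfl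

end AuxUnbiased

theorem adsaga_unbiased_trajectory
    {d n m : ℕ} (hd : 0 < d) (hn : 0 < n) (hm : 0 < m) (hmn : m ∣ n)
    (L Lf μ : ℝ) (hL : 0 < L) (hLf : 0 < Lf) (hμ : 0 < μ)
    (f : Fin n → EuclideanSpace ℝ (Fin d) → ℝ)
    (gradf : Fin n → EuclideanSpace ℝ (Fin d) → EuclideanSpace ℝ (Fin d))
    (hgrad : ∀ i x, HasGradientAt (f i) (gradf i x) x)
    (hconv : ∀ i, ConvexOn ℝ Set.univ (f i))
    (hsmooth : ∀ i (x y : EuclideanSpace ℝ (Fin d)), ‖gradf i x - gradf i y‖ ≤ L * ‖x - y‖)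
    (hFsmooth : ∀ x y : EuclideanSpace ℝ (Fin d),
      ‖((1 : ℝ) / n) • (∑ i, gradf i x) - ((1 : ℝ) / n) • (∑ i, gradf i y)‖ ≤ Lf * ‖x - y‖)
    (hFstrong : ∀ x y : EuclideanSpace ℝ (Fin d),
      μ * ‖x - y‖ ^ 2 ≤
        ⟪((1 : ℝ) / n) • (∑ i, gradf i x) - ((1 : ℝ) / n) • (∑ i, gradf i y), x - y⟫)
    (xstar : EuclideanSpace ℝ (Fin d))
    (hmin : ∀ x : EuclideanSpace ℝ (Fin d),
      (((1 : ℝ) / n) * ∑ i, f i xstar) ≤ ((1 : ℝ) / n) * ∑ i, f i x)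
    (hstarzero : (∑ i, gradf i xstar) = 0)
    (J : Fin n → Fin m)
    (hpart : ∀ j, (Finset.univ.filter (fun i => J i = j)).card = n / m)
    (p : Fin m → ℝ) (hp : ∀ j, 0 < p j) (hpsum : (∑ j, p j) = 1)
    (pmin pmax : ℝ)
    (hpmin : IsLeast (Set.range p) pmin) (hpmax : IsGreatest (Set.range p) pmax)
    (η : ℝ) (hη : 0 < η)
    (S : AdsagaState d n m)
    (hidx : ∀ j, J (S.idx j) = j)
    (hinv : ∀ j, S.alpha (S.idx j) = S.beta j)
    :
    ((∑ i : Fin n, (p (J i) * ((m : ℝ) / n)) • (AdsagaState.step gradf p pmin η S (J i) i).x)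
        = S.x - (η * pmin) • S.v)
    ∧ ((∑ i : Fin n, (p (J i) * ((m : ℝ) / n)) • (AdsagaState.step gradf p pmin η S (J i) i).v)
        = S.v - pmin • (S.v - ((m : ℝ) / n) • ∑ i, gradf i S.x)) := by
  classical
  obtain ⟨k, hk⟩ := hmn
  subst hk
  have hk0 : 0 < k := Nat.pos_of_ne_zero (fun h => by simp [h] at hn)
  have hdiv : (m * k) / m = k := Nat.mul_div_cancel_left k hm
  have hm0 : (m : ℝ) ≠ 0 := Nat.cast_ne_zero.2 hm.ne'
  have hkR0 : (k : ℝ) ≠ 0 := Nat.cast_ne_zero.2 hk0.ne'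
  have hp0 : ∀ j, p j ≠ 0 := fun j => (hp j).ne'
  -- the weights sum to 1
  have hw : ∑ i : Fin (m * k), p (J i) * ((m : ℝ) / ((m * k : ℕ) : ℝ)) = 1 := by
    rw [← Finset.sum_mul, adsaga_sum_comp' J hpart, hdiv, smul_eq_mul, hpsum, mul_one]
    push_cast
    field_simp
  constructor
  · -- first claim
    calc ∑ i : Fin (m * k), (p (J i) * ((m : ℝ) / ((m * k : ℕ) : ℝ))) •
          (AdsagaState.step gradf p pmin η S (J i) i).x
        = ∑ i : Fin (m * k), ((p (J i) * ((m : ℝ) / ((m * k : ℕ) : ℝ))) • S.x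
            - (η * pmin * ((m : ℝ) / ((m * k : ℕ) : ℝ))) • (S.u (J i) + S.abar)) := by
          refine Finset.sum_congr rfl fun i _ => ?_
          rw [adsaga_step_x, smul_sub, smul_smul]
          congr 2
          field_simp [hp0 (J i)]
      _ = (∑ i : Fin (m * k), p (J i) * ((m : ℝ) / ((m * k : ℕ) : ℝ))) • S.x
            - (η * pmin * ((m : ℝ) / ((m * k : ℕ) : ℝ))) •
              ∑ i : Fin (m * k), (S.u (J i) + S.abar) := by
          rw [Finset.sum_sub_distrib, ← Finset.sum_smul, ← Finset.smul_sum]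
      _ = S.x - (η * pmin) • S.v := by
          rw [hw, one_smul]
          congr 1
          rw [Finset.sum_add_distrib, adsaga_sum_comp' J hpart S.u, Finset.sum_const,
            Finset.card_univ, Fintype.card_fin, ← Nat.cast_smul_eq_nsmul ℝ]
          simp only [hdiv, AdsagaState.v, AdsagaState.abar]
          match_scalars <;> (push_cast; field_simp; try ring)
  · -- second claim
    have hv : ∀ i : Fin (m * k),
        (AdsagaState.step gradf p pmin η S (J i) i).v
          = S.v + (pmin / p (J i)) •
              ((gradf i S.x - (if i = S.idx (J i) then S.g (J i) else S.alpha i))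
                - S.u (J i)
                + (((m : ℝ) / ((m * k : ℕ) : ℝ)) • (S.g (J i) - S.beta (J i)))) := by
      intro i
      simp only [AdsagaState.v, adsaga_step_u, adsaga_step_alpha, AdsagaState.abar,
        AdsagaState.hvec]
      rw [adsaga_sum_update (Finset.mem_univ (J i)), adsaga_sum_update (Finset.mem_univ (S.idx (J i))),
        hinv (J i)]
      match_scalars <;> (push_cast; field_simp [hp0 (J i)]; try ring)
    have hB : ∑ i : Fin (m * k), (if i = S.idx (J i) then S.g (J i) else S.alpha i)
        = (∑ i, S.alpha i) + ∑ j, (S.g j - S.beta j) := by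
      rw [← Finset.sum_fiberwise Finset.univ J
          (fun i => if i = S.idx (J i) then S.g (J i) else S.alpha i),
        ← Finset.sum_fiberwise Finset.univ J S.alpha, ← Finset.sum_add_distrib]
      refine Finset.sum_congr rfl fun j _ => ?_
      have hmem : S.idx j ∈ Finset.univ.filter (fun i => J i = j) :=
        Finset.mem_filter.2 ⟨Finset.mem_univ _, hidx j⟩
      calc ∑ i ∈ Finset.univ.filter (fun i => J i = j),
            (if i = S.idx (J i) then S.g (J i) else S.alpha i)
          = ∑ i ∈ Finset.univ.filter (fun i => J i = j),
              Function.update S.alpha (S.idx j) (S.g j) i := by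
            refine Finset.sum_congr rfl fun i hi => ?_
            rw [(Finset.mem_filter.1 hi).2, Function.update_apply]
        _ = (∑ i ∈ Finset.univ.filter (fun i => J i = j), S.alpha i)
              + (S.g j - S.alpha (S.idx j)) := adsaga_sum_update hmem _ _
        _ = _ := by rw [hinv j]
    calc ∑ i : Fin (m * k), (p (J i) * ((m : ℝ) / ((m * k : ℕ) : ℝ))) •
          (AdsagaState.step gradf p pmin η S (J i) i).v
        = ∑ i : Fin (m * k), ((p (J i) * ((m : ℝ) / ((m * k : ℕ) : ℝ))) • S.v
            + (pmin * ((m : ℝ) / ((m * k : ℕ) : ℝ))) •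
              ((gradf i S.x - (if i = S.idx (J i) then S.g (J i) else S.alpha i))
                - S.u (J i)
                + (((m : ℝ) / ((m * k : ℕ) : ℝ)) • (S.g (J i) - S.beta (J i))))) := by
          refine Finset.sum_congr rfl fun i _ => ?_
          rw [hv i, smul_add, smul_smul]
          congr 2
          field_simp [hp0 (J i)]
      _ = (∑ i : Fin (m * k), p (J i) * ((m : ℝ) / ((m * k : ℕ) : ℝ))) • S.v
            + (pmin * ((m : ℝ) / ((m * k : ℕ) : ℝ))) •
              ((((∑ i : Fin (m * k), gradf i S.x)
                - ∑ i : Fin (m * k), (if i = S.idx (J i) then S.g (J i) else S.alpha i))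
                - ∑ i : Fin (m * k), S.u (J i))
                + ((m : ℝ) / ((m * k : ℕ) : ℝ)) • ∑ i : Fin (m * k), (S.g (J i) - S.beta (J i))) := by
          rw [Finset.sum_add_distrib, ← Finset.sum_smul, ← Finset.smul_sum,
            Finset.sum_add_distrib, Finset.sum_sub_distrib, Finset.sum_sub_distrib,
            ← Finset.smul_sum]
      _ = S.v - pmin • (S.v - ((m : ℝ) / ((m * k : ℕ) : ℝ)) • ∑ i, gradf i S.x) := by
          rw [hw, one_smul, hB,
            adsaga_sum_comp' J hpart S.u, adsaga_sum_comp' J hpart (fun j => S.g j - S.beta j)]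
          simp only [hdiv, AdsagaState.v, AdsagaState.abar]
          match_scalars <;> (push_cast; field_simp; try ring)
end

section
/- For a choice (j, i) with i ∈ S_j, let Δ₁(j,i) = x⁺ − x and Δ₂(j,i) = η·((Σ_{j'} u⁺_{j'} + m·ᾱ⁺) − v). Then E[ ‖Δ₁‖² − 2·⟨Δ₁, Δ₂⟩ + 2·‖Δ₂‖² ] ≤ (4·m·p_min·η²/n)·( 4·Σ_j ‖g*_j‖² + 4·Σ_j ‖β*_j‖² + (n/m)·Σ_j ‖u_j‖² + 2·Σ_i ‖α*_i‖² + 2·Σ_i ‖∇f_i(x) − ∇f_i(x*)‖² ). -/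
open Finset
open scoped RealInnerProductSpace BigOperators

/-! Along a choice `(j, i)` both increments are multiples of `κ = η p_min / p_j`: the step
moves `x` by `-κ (u_j + ᾱ)` and `η v` by `κ (w_i - u_j)`, where
`w_i = ∇f_i(x) - α_i + (m/n - [i = i_j]) h_j`.
Hence the quadratic form equals `κ² (‖ᾱ + w_i‖² + ‖w_i - u_j‖²)`, and `p_j κ² ≤ η² p_min`.
Summed over `i`, the corrections `(m/n - [i = i_j]) h_j` cancel on each block `S_j`, so
`∑ w_i = ∑ (∇f_i(x) - ∇f_i(x*)) - n ᾱ`; this lets the mean `ᾱ` cost at most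
`∑ ‖∇f_i(x) - ∇f_i(x*)‖²`. Everything else is Young's inequality. -/

section InnerProductSpace

variable {F : Type*} [NormedAddCommGroup F] [InnerProductSpace ℝ F]

theorem norm_add_sq_le_mul_add_mul {t : ℝ} (ht : 0 < t) (x y : F) :
    ‖x + y‖ ^ 2 ≤ (1 + t) * ‖x‖ ^ 2 + (1 + t⁻¹) * ‖y‖ ^ 2 := by
  have hinner : ⟪x, y⟫ ≤ ‖x‖ * ‖y‖ := real_inner_le_norm x y
  have hyoung : 0 ≤ t⁻¹ * (t * ‖x‖ - ‖y‖) ^ 2 := by positivity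
  have hexpand :
      t⁻¹ * (t * ‖x‖ - ‖y‖) ^ 2 = t * ‖x‖ ^ 2 - 2 * (‖x‖ * ‖y‖) + t⁻¹ * ‖y‖ ^ 2 := by
    field_simp
    ring
  rw [norm_add_sq_real]
  linarith

theorem norm_sub_sq_le_mul_add_mul {t : ℝ} (ht : 0 < t) (x y : F) :
    ‖x - y‖ ^ 2 ≤ (1 + t) * ‖x‖ ^ 2 + (1 + t⁻¹) * ‖y‖ ^ 2 := by
  simpa [sub_eq_add_neg] using norm_add_sq_le_mul_add_mul ht x (-y)

theorem norm_add_add_sq_le (x y z : F) :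
    ‖x + y + z‖ ^ 2 ≤ 3 * (‖x‖ ^ 2 + ‖y‖ ^ 2 + ‖z‖ ^ 2) := by
  have hxyz := norm_add_sq_le_mul_add_mul (show (0 : ℝ) < 1 / 2 by norm_num) (x + y) z
  have hxy := norm_add_sq_le_mul_add_mul one_pos x y
  norm_num at hxyz hxy
  linarith

theorem norm_sq_sub_two_inner_add_two_norm_sq (a b : F) :
    ‖a‖ ^ 2 - 2 * ⟪a, b⟫ + 2 * ‖b‖ ^ 2 = ‖a - b‖ ^ 2 + ‖b‖ ^ 2 := by
  rw [norm_sub_sq_real]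
  ring

theorem sum_norm_add_sq_le {ι : Type*} [Fintype ι] (a : F) (w g : ι → F)
    (hsum : ∑ i, w i = ∑ i, g i - (Fintype.card ι : ℝ) • a) :
    ∑ i, ‖a + w i‖ ^ 2 ≤ ∑ i, ‖w i‖ ^ 2 + ∑ i, ‖g i‖ ^ 2 := by
  have hexpand : ∑ i, ‖a + w i‖ ^ 2
      = ∑ i, (2 * ⟪a, g i⟫ - ‖a‖ ^ 2) + ∑ i, ‖w i‖ ^ 2 := by
    simp only [norm_add_sq_real, sum_add_distrib, sum_sub_distrib, ← mul_sum, ← inner_sum, hsum,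
      inner_sub_right, real_inner_smul_right, real_inner_self_eq_norm_sq, sum_const, card_univ,
      nsmul_eq_mul]
    ring
  have hyoung : ∀ i, 2 * ⟪a, g i⟫ - ‖a‖ ^ 2 ≤ ‖g i‖ ^ 2 := fun i => by
    nlinarith [norm_sub_sq_real a (g i), sq_nonneg ‖a - g i‖]
  rw [hexpand, add_comm]
  gcongr with i
  exact hyoung i

end InnerProductSpace

section Fibers

variable {ι κ M : Type*} [Fintype ι] [Fintype κ]

theorem Finset.sum_update_eq_add_sub [DecidableEq κ] [AddCommGroup M] (f : κ → M) (j : κ)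
    (b : M) :
    ∑ x, Function.update f j b x = ∑ x, f x + (b - f j) := by
  rw [sum_update_of_mem (mem_univ j), sum_eq_add_sum_sdiff_singleton_of_mem (mem_univ j) f]
  abel

theorem Finset.sum_comp_eq_card_fiber_smul [DecidableEq κ] [AddCommMonoid M] (J : ι → κ) {k : ℕ}
    (hJ : ∀ j, #{i | J i = j} = k) (F : κ → M) :
    ∑ i, F (J i) = k • ∑ j, F j := by
  rw [← sum_fiberwise univ J (fun i => F (J i)), smul_sum]
  refine sum_congr rfl fun j _ => ?_
  rw [sum_congr rfl fun i hi => by rw [(mem_filter.mp hi).2], sum_const, hJ j]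

theorem Finset.sum_ite_eq_section [DecidableEq ι] [AddCommMonoid M] (J : ι → κ) (idx : κ → ι)
    (hidx : ∀ j, J (idx j) = j) (F : κ → M) :
    ∑ i, (if i = idx (J i) then F (J i) else 0) = ∑ j, F j := by
  refine (Fintype.sum_of_injective idx (Function.LeftInverse.injective hidx) F _ ?_ ?_).symm
  · rintro i hi
    rw [if_neg fun h => hi ⟨J i, h.symm⟩]
  · intro j
    rw [hidx, if_pos rfl]

variable [DecidableEq ι] [DecidableEq κ] {J : ι → κ} {idx : κ → ι} {k : ℕ} {q : ℝ}

theorem sum_centered_smul_eq_zero {F : Type*} [AddCommGroup F] [Module ℝ F]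
    (hJ : ∀ j, #{i | J i = j} = k) (hidx : ∀ j, J (idx j) = j) (hq : (k : ℝ) * q = 1) (h : κ → F) :
    ∑ i, (q - if i = idx (J i) then 1 else 0) • h (J i) = 0 := by
  have hsplit : ∀ i, (q - if i = idx (J i) then 1 else 0) • h (J i)
      = q • h (J i) - if i = idx (J i) then h (J i) else 0 := fun i => by
    split_ifs <;> simp [sub_smul]
  rw [sum_congr rfl fun i _ => hsplit i, sum_sub_distrib, ← smul_sum,
    sum_comp_eq_card_fiber_smul J hJ, sum_ite_eq_section J idx hidx, ← Nat.cast_smul_eq_nsmul ℝ,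
    smul_smul, mul_comm, hq, one_smul, sub_self]

theorem sum_norm_centered_smul_sq_le {F : Type*} [SeminormedAddCommGroup F] [NormedSpace ℝ F]
    (hJ : ∀ j, #{i | J i = j} = k) (hidx : ∀ j, J (idx j) = j) (hq : (k : ℝ) * q = 1) (h : κ → F) :
    ∑ i, ‖(q - if i = idx (J i) then 1 else 0) • h (J i)‖ ^ 2 ≤ ∑ j, ‖h j‖ ^ 2 := by
  have hq_nonneg : 0 ≤ q := (pos_of_mul_pos_right (hq ▸ one_pos) k.cast_nonneg).le
  have hsplit : ∀ i, ‖(q - if i = idx (J i) then 1 else 0) • h (J i)‖ ^ 2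
      = q ^ 2 * ‖h (J i)‖ ^ 2 + if i = idx (J i) then (1 - 2 * q) * ‖h (J i)‖ ^ 2 else 0 :=
    fun i => by
      rw [norm_smul, mul_pow, Real.norm_eq_abs, sq_abs]
      split_ifs <;> ring
  have hfiber : ∑ i, ‖h (J i)‖ ^ 2 = k * ∑ j, ‖h j‖ ^ 2 := by
    rw [sum_comp_eq_card_fiber_smul J hJ fun j => ‖h j‖ ^ 2, nsmul_eq_mul]
  rw [sum_congr rfl fun i _ => hsplit i, sum_add_distrib, ← mul_sum, hfiber,
    sum_ite_eq_section J idx hidx fun j => (1 - 2 * q) * ‖h j‖ ^ 2, ← mul_sum]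
  have hq2 : q ^ 2 * (k * ∑ j, ‖h j‖ ^ 2) = q * ∑ j, ‖h j‖ ^ 2 := by
    linear_combination q * (∑ j, ‖h j‖ ^ 2) * hq
  have hnonneg : 0 ≤ q * ∑ j, ‖h j‖ ^ 2 := by positivity
  linarith

end Fibers

theorem mul_sq_mul_div_le {a b : ℝ} (ha : 0 ≤ a) (hab : a ≤ b) (c : ℝ) :
    b * (c * a / b) ^ 2 ≤ c ^ 2 * a := by
  rcases (ha.trans hab).eq_or_lt with rfl | hb
  · simp [le_antisymm hab ha]
  · rw [div_pow, mul_div_assoc', div_le_iff₀ (by positivity)]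
    nlinarith [mul_le_mul_of_nonneg_left hab (mul_nonneg (sq_nonneg c) ha)]

theorem natCast_div_of_dvd {n m : ℕ} (hn : 0 < n) (hmn : m ∣ n) :
    ((n / m : ℕ) : ℝ) = n / m :=
  Nat.cast_div hmn (Nat.cast_ne_zero.mpr (Nat.pos_of_dvd_of_pos hmn hn).ne')

theorem natCast_div_mul_div_eq_one {n m : ℕ} (hn : 0 < n) (hmn : m ∣ n) :
    ((n / m : ℕ) : ℝ) * ((m : ℝ) / n) = 1 := by
  have hm : (m : ℝ) ≠ 0 := Nat.cast_ne_zero.mpr (Nat.pos_of_dvd_of_pos hmn hn).ne'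
  have hn' : (n : ℝ) ≠ 0 := Nat.cast_ne_zero.mpr hn.ne'
  rw [natCast_div_of_dvd hn hmn]
  field_simp

namespace AdsagaState

variable {d n m : ℕ} (gradf : Fin n → EuclideanSpace ℝ (Fin d) → EuclideanSpace ℝ (Fin d))
  (S : AdsagaState d n m)

/-- The `if` is there because for `i = i_j` the step subtracts `g_j = α_i + h_j`, not `α_i`. -/
noncomputable def innovation (j : Fin m) (i : Fin n) : EuclideanSpace ℝ (Fin d) :=
  gradf i S.x - S.alpha i + ((m : ℝ) / n - if i = S.idx j then 1 else 0) • S.hvec j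

variable (p : Fin m → ℝ) (pmin η : ℝ)

theorem step_x_sub (j : Fin m) (i : Fin n) :
    (S.step gradf p pmin η j i).x - S.x = -(η * pmin / p j) • (S.u j + S.abar) := by
  simp only [step, neg_smul]
  abel

theorem smul_step_v_sub {j : Fin m} (hinv : S.alpha (S.idx j) = S.beta j) (i : Fin n) :
    η • ((S.step gradf p pmin η j i).v - S.v)
      = (η * pmin / p j) • (S.innovation gradf j i - S.u j) := by
  simp only [v, abar, step, innovation, hvec]
  rw [sum_update_eq_add_sub, sum_update_eq_add_sub, hinv]
  split_ifs with hi
  · rw [hi, hinv]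
    match_scalars <;> ring
  · match_scalars <;> ring

theorem step_quadratic_term_eq {j : Fin m} (hinv : S.alpha (S.idx j) = S.beta j) (i : Fin n) :
    ‖(S.step gradf p pmin η j i).x - S.x‖ ^ 2
        - 2 * ⟪(S.step gradf p pmin η j i).x - S.x, η • ((S.step gradf p pmin η j i).v - S.v)⟫
        + 2 * ‖η • ((S.step gradf p pmin η j i).v - S.v)‖ ^ 2
      = (η * pmin / p j) ^ 2
          * (‖S.abar + S.innovation gradf j i‖ ^ 2 + ‖S.innovation gradf j i - S.u j‖ ^ 2) := by
  set κ := η * pmin / p j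
  have hdiff : -κ • (S.u j + S.abar) - κ • (S.innovation gradf j i - S.u j)
      = -κ • (S.abar + S.innovation gradf j i) := by module
  rw [norm_sq_sub_two_inner_add_two_norm_sq, step_x_sub, smul_step_v_sub gradf S p pmin η hinv,
    hdiff, norm_smul, norm_smul, mul_pow, mul_pow, Real.norm_eq_abs, Real.norm_eq_abs, abs_neg,
    sq_abs, mul_add]

variable {J : Fin n → Fin m} (xstar : EuclideanSpace ℝ (Fin d))

theorem sum_innovation (hn : 0 < n) (hmn : m ∣ n) (hpart : ∀ j, #{i | J i = j} = n / m)
    (hidx : ∀ j, J (S.idx j) = j) (hstarzero : ∑ i, gradf i xstar = 0) :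
    ∑ i, S.innovation gradf (J i) i = ∑ i, (gradf i S.x - gradf i xstar) - (n : ℝ) • S.abar := by
  have hsum_alpha : (n : ℝ) • S.abar = ∑ i, S.alpha i := by
    rw [abar, smul_smul, mul_one_div_cancel (Nat.cast_ne_zero.mpr hn.ne'), one_smul]
  simp only [innovation, sum_add_distrib, sum_sub_distrib, hstarzero, hsum_alpha,
    sum_centered_smul_eq_zero hpart hidx (natCast_div_mul_div_eq_one hn hmn) S.hvec, add_zero,
    sub_zero]

theorem sum_norm_innovation_sq_le (hn : 0 < n) (hmn : m ∣ n)
    (hpart : ∀ j, #{i | J i = j} = n / m) (hidx : ∀ j, J (S.idx j) = j) :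
    ∑ i, ‖S.innovation gradf (J i) i‖ ^ 2
      ≤ 3 * (∑ i, ‖gradf i S.x - gradf i xstar‖ ^ 2 + ∑ i, ‖S.alpha i - gradf i xstar‖ ^ 2
        + ∑ j, ‖S.hvec j‖ ^ 2) := by
  have hsplit : ∀ i, S.innovation gradf (J i) i = (gradf i S.x - gradf i xstar)
      + -(S.alpha i - gradf i xstar)
      + ((m : ℝ) / n - if i = S.idx (J i) then 1 else 0) • S.hvec (J i) := fun i => by
    rw [innovation]
    abel
  calc ∑ i, ‖S.innovation gradf (J i) i‖ ^ 2
      ≤ ∑ i, 3 * (‖gradf i S.x - gradf i xstar‖ ^ 2 + ‖S.alpha i - gradf i xstar‖ ^ 2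
          + ‖((m : ℝ) / n - if i = S.idx (J i) then 1 else 0) • S.hvec (J i)‖ ^ 2) := by
        gcongr with i
        rw [hsplit i]
        simpa only [norm_neg] using norm_add_add_sq_le (gradf i S.x - gradf i xstar)
          (-(S.alpha i - gradf i xstar)) _
    _ ≤ _ := by
        rw [← mul_sum, sum_add_distrib, sum_add_distrib]
        gcongr
        exact sum_norm_centered_smul_sq_le hpart hidx (natCast_div_mul_div_eq_one hn hmn) _

theorem sum_step_norm_sq_le (hn : 0 < n) (hmn : m ∣ n) (hpart : ∀ j, #{i | J i = j} = n / m)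
    (hidx : ∀ j, J (S.idx j) = j) (hstarzero : ∑ i, gradf i xstar = 0) :
    ∑ i, (‖S.abar + S.innovation gradf (J i) i‖ ^ 2
        + ‖S.innovation gradf (J i) i - S.u (J i)‖ ^ 2)
      ≤ 4 * ((4 * ∑ j, ‖S.g j - gradf (S.idx j) xstar‖ ^ 2)
          + (4 * ∑ j, ‖S.beta j - gradf (S.idx j) xstar‖ ^ 2)
          + (((n : ℝ) / m) * ∑ j, ‖S.u j‖ ^ 2)
          + (2 * ∑ i, ‖S.alpha i - gradf i xstar‖ ^ 2)
          + (2 * ∑ i, ‖gradf i S.x - gradf i xstar‖ ^ 2)) := by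
  have hmean := sum_norm_add_sq_le S.abar (fun i => S.innovation gradf (J i) i)
    (fun i => gradf i S.x - gradf i xstar)
    (by rw [Fintype.card_fin]; exact S.sum_innovation gradf xstar hn hmn hpart hidx hstarzero)
  have hfiber : ∑ i, ‖S.u (J i)‖ ^ 2 = (n : ℝ) / m * ∑ j, ‖S.u j‖ ^ 2 := by
    rw [sum_comp_eq_card_fiber_smul J hpart fun j => ‖S.u j‖ ^ 2, nsmul_eq_mul,
      natCast_div_of_dvd hn hmn]
  have hshift : ∑ i, ‖S.innovation gradf (J i) i - S.u (J i)‖ ^ 2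
      ≤ 4 / 3 * ∑ i, ‖S.innovation gradf (J i) i‖ ^ 2 + 4 * ((n : ℝ) / m * ∑ j, ‖S.u j‖ ^ 2) := by
    calc ∑ i, ‖S.innovation gradf (J i) i - S.u (J i)‖ ^ 2
        ≤ ∑ i, (4 / 3 * ‖S.innovation gradf (J i) i‖ ^ 2 + 4 * ‖S.u (J i)‖ ^ 2) := by
          gcongr with i
          have := norm_sub_sq_le_mul_add_mul (show (0 : ℝ) < 1 / 3 by norm_num)
            (S.innovation gradf (J i) i) (S.u (J i))
          norm_num at this
          linarith
      _ = _ := by rw [sum_add_distrib, ← mul_sum, ← mul_sum, hfiber]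
  have hW := S.sum_norm_innovation_sq_le gradf xstar hn hmn hpart hidx
  have hhvec : ∑ j, ‖S.hvec j‖ ^ 2 ≤ 2 * ∑ j, ‖S.g j - gradf (S.idx j) xstar‖ ^ 2
      + 2 * ∑ j, ‖S.beta j - gradf (S.idx j) xstar‖ ^ 2 := by
    rw [mul_sum, mul_sum, ← sum_add_distrib]
    gcongr with j
    have := norm_sub_sq_le_mul_add_mul one_pos (S.g j - gradf (S.idx j) xstar)
      (S.beta j - gradf (S.idx j) xstar)
    rw [sub_sub_sub_cancel_right] at this
    norm_num at this
    exact this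
  have hg : 0 ≤ ∑ j, ‖S.g j - gradf (S.idx j) xstar‖ ^ 2 := by positivity
  have hβ : 0 ≤ ∑ j, ‖S.beta j - gradf (S.idx j) xstar‖ ^ 2 := by positivity
  have hα : 0 ≤ ∑ i, ‖S.alpha i - gradf i xstar‖ ^ 2 := by positivity
  have hgrad : 0 ≤ ∑ i, ‖gradf i S.x - gradf i xstar‖ ^ 2 := by positivity
  rw [sum_add_distrib]
  linarith

end AdsagaState

theorem adsaga_quadratic_term_bound_general
    {d n m : ℕ} (hn : 0 < n) (hmn : m ∣ n)
    (gradf : Fin n → EuclideanSpace ℝ (Fin d) → EuclideanSpace ℝ (Fin d))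
    (xstar : EuclideanSpace ℝ (Fin d))
    (hstarzero : (∑ i, gradf i xstar) = 0)
    (J : Fin n → Fin m)
    (hpart : ∀ j, (Finset.univ.filter (fun i => J i = j)).card = n / m)
    (p : Fin m → ℝ) (hp : ∀ j, 0 < p j)
    (pmin : ℝ)
    (hpmin : IsLeast (Set.range p) pmin)
    (η : ℝ)
    (S : AdsagaState d n m)
    (hidx : ∀ j, J (S.idx j) = j)
    (hinv : ∀ j, S.alpha (S.idx j) = S.beta j)
    :
    (∑ i : Fin n, p (J i) * ((m : ℝ) / n) *
        (‖(AdsagaState.step gradf p pmin η S (J i) i).x - S.x‖ ^ 2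
          - 2 * ⟪(AdsagaState.step gradf p pmin η S (J i) i).x - S.x, η • ((AdsagaState.step gradf p pmin η S (J i) i).v - S.v)⟫
          + 2 * ‖η • ((AdsagaState.step gradf p pmin η S (J i) i).v - S.v)‖ ^ 2))
      ≤ (4 * (m : ℝ) * pmin * η ^ 2 / n) *
          ((4 * ∑ j, ‖S.g j - gradf (S.idx j) xstar‖ ^ 2)
            + (4 * ∑ j, ‖S.beta j - gradf (S.idx j) xstar‖ ^ 2)
            + (((n : ℝ) / m) * ∑ j, ‖S.u j‖ ^ 2)
            + (2 * ∑ i, ‖S.alpha i - gradf i xstar‖ ^ 2)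
            + (2 * ∑ i, ‖gradf i S.x - gradf i xstar‖ ^ 2)) := by
  have hpmin_nonneg : 0 ≤ pmin := by
    obtain ⟨j₀, rfl⟩ := hpmin.1
    exact (hp j₀).le
  have hweight (j : Fin m) : p j * (η * pmin / p j) ^ 2 ≤ η ^ 2 * pmin :=
    mul_sq_mul_div_le hpmin_nonneg (hpmin.2 ⟨j, rfl⟩) η
  calc _ = ∑ i, (m : ℝ) / n * (p (J i) * (η * pmin / p (J i)) ^ 2)
          * (‖S.abar + S.innovation gradf (J i) i‖ ^ 2
            + ‖S.innovation gradf (J i) i - S.u (J i)‖ ^ 2) := by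
        refine sum_congr rfl fun i _ => ?_
        rw [S.step_quadratic_term_eq gradf p pmin η (hinv (J i))]
        ring
    _ ≤ ∑ i, (m : ℝ) / n * (η ^ 2 * pmin)
          * (‖S.abar + S.innovation gradf (J i) i‖ ^ 2
            + ‖S.innovation gradf (J i) i - S.u (J i)‖ ^ 2) := by
        gcongr ∑ i, _ * ?_ * _ with i
        exact hweight (J i)
    _ ≤ (m : ℝ) / n * (η ^ 2 * pmin) * (4 * _) := by
        rw [← mul_sum]
        gcongr
        exact S.sum_step_norm_sq_le gradf xstar hn hmn hpart hidx hstarzero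
    _ = _ := by ring

theorem adsaga_quadratic_term_bound
    {d n m : ℕ} (hd : 0 < d) (hn : 0 < n) (hm : 0 < m) (hmn : m ∣ n)
    (L Lf μ : ℝ) (hL : 0 < L) (hLf : 0 < Lf) (hμ : 0 < μ)
    (f : Fin n → EuclideanSpace ℝ (Fin d) → ℝ)
    (gradf : Fin n → EuclideanSpace ℝ (Fin d) → EuclideanSpace ℝ (Fin d))
    (hgrad : ∀ i x, HasGradientAt (f i) (gradf i x) x)
    (hconv : ∀ i, ConvexOn ℝ Set.univ (f i))
    (hsmooth : ∀ i (x y : EuclideanSpace ℝ (Fin d)), ‖gradf i x - gradf i y‖ ≤ L * ‖x - y‖)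
    (hFsmooth : ∀ x y : EuclideanSpace ℝ (Fin d),
      ‖((1 : ℝ) / n) • (∑ i, gradf i x) - ((1 : ℝ) / n) • (∑ i, gradf i y)‖ ≤ Lf * ‖x - y‖)
    (hFstrong : ∀ x y : EuclideanSpace ℝ (Fin d),
      μ * ‖x - y‖ ^ 2 ≤
        ⟪((1 : ℝ) / n) • (∑ i, gradf i x) - ((1 : ℝ) / n) • (∑ i, gradf i y), x - y⟫)
    (xstar : EuclideanSpace ℝ (Fin d))
    (hmin : ∀ x : EuclideanSpace ℝ (Fin d),
      (((1 : ℝ) / n) * ∑ i, f i xstar) ≤ ((1 : ℝ) / n) * ∑ i, f i x)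
    (hstarzero : (∑ i, gradf i xstar) = 0)
    (J : Fin n → Fin m)
    (hpart : ∀ j, (Finset.univ.filter (fun i => J i = j)).card = n / m)
    (p : Fin m → ℝ) (hp : ∀ j, 0 < p j) (hpsum : (∑ j, p j) = 1)
    (pmin pmax : ℝ)
    (hpmin : IsLeast (Set.range p) pmin) (hpmax : IsGreatest (Set.range p) pmax)
    (η : ℝ) (hη : 0 < η)
    (S : AdsagaState d n m)
    (hidx : ∀ j, J (S.idx j) = j)
    (hinv : ∀ j, S.alpha (S.idx j) = S.beta j)
    :
    (∑ i : Fin n, p (J i) * ((m : ℝ) / n) *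
        (‖(AdsagaState.step gradf p pmin η S (J i) i).x - S.x‖ ^ 2
          - 2 * ⟪(AdsagaState.step gradf p pmin η S (J i) i).x - S.x, η • ((AdsagaState.step gradf p pmin η S (J i) i).v - S.v)⟫
          + 2 * ‖η • ((AdsagaState.step gradf p pmin η S (J i) i).v - S.v)‖ ^ 2))
      ≤ (4 * (m : ℝ) * pmin * η ^ 2 / n) *
          ((4 * ∑ j, ‖S.g j - gradf (S.idx j) xstar‖ ^ 2)
            + (4 * ∑ j, ‖S.beta j - gradf (S.idx j) xstar‖ ^ 2)
            + (((n : ℝ) / m) * ∑ j, ‖S.u j‖ ^ 2)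
            + (2 * ∑ i, ‖S.alpha i - gradf i xstar‖ ^ 2)
            + (2 * ∑ i, ‖gradf i S.x - gradf i xstar‖ ^ 2)) :=
  adsaga_quadratic_term_bound_general hn hmn gradf xstar hstarzero J hpart p hp pmin hpmin η S hidx
    hinv
end

section
/- For any ADSAGA state, E[φ1⁺] − φ1 ≤ −(4·m·η²·p_min/n)·⟨v, Σ_{i=1}^n ∇f_i(x)⟩ + 4·m·L_f·η³·p_min·Σ_j ‖u_j‖² + (4·m²·L_f·η³·p_min/n)·Σ_i ‖α*_i‖², where φ1⁺ denotes the value of φ1 at the state produced by one step with choice (j, i). -/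
open Finset
open scoped RealInnerProductSpace BigOperators

/-! The step moves `x` by `-(η p_min / p_j) (u_j + ᾱ)`, so the descent lemma for the
`L_f`-smooth average `f` bounds the change of `φ1` by a linear term plus `L_f / 2` times the squared
step. Weighting by `p_j`, the linear terms add up to `-(η p_min / n) ⟪v, ∑ ∇f_i(x)⟫` because
`∑_j (u_j + ᾱ) = v`, while `p_j (η p_min / p_j)² ≤ η² p_min`. Finally
`‖u_j + ᾱ‖² ≤ 2‖u_j‖² + 2‖ᾱ‖²` and, as `∑ ∇f_i(x*) = 0`, `‖ᾱ‖² ≤ (1/n) ∑ ‖α*_i‖²`. -/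

section Gradient

variable {E : Type*} [NormedAddCommGroup E] [InnerProductSpace ℝ E] [CompleteSpace E]

-- `t ↦ F (x + t • δ) - t * ⟪G x, δ⟫ - L / 2 * t ^ 2 * ‖δ‖ ^ 2` is antitone on `t ≥ 0`.
theorem le_add_inner_add_of_lipschitz_gradient {F : E → ℝ} {G : E → E} {L : ℝ}
    (hF : ∀ x, HasGradientAt F (G x) x) (hG : ∀ x y, ‖G x - G y‖ ≤ L * ‖x - y‖) (x δ : E) :
    F (x + δ) ≤ F x + ⟪G x, δ⟫ + L / 2 * ‖δ‖ ^ 2 := by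
  let φ : ℝ → ℝ := fun t => F (x + t • δ) - t * ⟪G x, δ⟫ - L / 2 * t ^ 2 * ‖δ‖ ^ 2
  have hφ : ∀ t, HasDerivAt φ (⟪G (x + t • δ), δ⟫ - ⟪G x, δ⟫ - L * t * ‖δ‖ ^ 2) t := by
    intro t
    have hline : HasDerivAt (fun t : ℝ => x + t • δ) δ t := by
      simpa using ((hasDerivAt_id t).smul_const δ).const_add x
    have hF' := (hF (x + t • δ)).hasFDerivAt.comp_hasDerivAt t hline
    simp only [Function.comp_def, InnerProductSpace.toDual_apply_apply] at hF'
    refine ((hF'.sub ((hasDerivAt_id t).mul_const ⟪G x, δ⟫)).sub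
      (((hasDerivAt_pow 2 t).const_mul (L / 2)).mul_const (‖δ‖ ^ 2))).congr_deriv ?_
    push_cast
    ring
  have hφ' : ∀ t ∈ interior (Set.Ici (0 : ℝ)),
      ⟪G (x + t • δ), δ⟫ - ⟪G x, δ⟫ - L * t * ‖δ‖ ^ 2 ≤ 0 := by
    intro t ht
    rw [interior_Ici, Set.mem_Ioi] at ht
    have hlip : ‖G (x + t • δ) - G x‖ ≤ L * (t * ‖δ‖) := by
      simpa [norm_smul, abs_of_pos ht] using hG (x + t • δ) x
    have := real_inner_le_norm (G (x + t • δ) - G x) δ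
    rw [inner_sub_left] at this
    nlinarith [mul_le_mul_of_nonneg_right hlip (norm_nonneg δ)]
  have hanti : AntitoneOn φ (Set.Ici 0) :=
    antitoneOn_of_hasDerivWithinAt_nonpos (convex_Ici 0)
      (fun t _ => (hφ t).continuousAt.continuousWithinAt)
      (fun t _ => (hφ t).hasDerivWithinAt) hφ'
  have := hanti Set.self_mem_Ici (Set.mem_Ici.2 zero_le_one) zero_le_one
  simp only [φ, zero_smul, add_zero, one_smul] at this
  linarith

theorem HasGradientAt.const_mul_sum {ι : Type*} (s : Finset ι) (c : ℝ) {f : ι → E → ℝ}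
    {g : ι → E} {x : E} (h : ∀ i ∈ s, HasGradientAt (f i) (g i) x) :
    HasGradientAt (fun y => c * ∑ i ∈ s, f i y) (c • ∑ i ∈ s, g i) x := by
  rw [hasGradientAt_iff_hasFDerivAt, map_smul, map_sum]
  exact (HasFDerivAt.fun_sum fun i hi => (h i hi).hasFDerivAt).const_mul c

end Gradient

theorem norm_sum_sq_le_card_mul {ι E : Type*} [SeminormedAddCommGroup E] (s : Finset ι)
    (a : ι → E) :
    ‖∑ i ∈ s, a i‖ ^ 2 ≤ #s * ∑ i ∈ s, ‖a i‖ ^ 2 :=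
  (pow_le_pow_left₀ (norm_nonneg _) (norm_sum_le s a) 2).trans sq_sum_le_card_mul_sum_sq

theorem norm_add_sq_le_two_mul {E : Type*} [SeminormedAddCommGroup E] (a b : E) :
    ‖a + b‖ ^ 2 ≤ 2 * ‖a‖ ^ 2 + 2 * ‖b‖ ^ 2 := by
  nlinarith [pow_le_pow_left₀ (norm_nonneg _) (norm_add_le a b) 2, add_sq_le (a := ‖a‖) (b := ‖b‖)]

theorem sum_fiber_uniform_mul_sub_le {ι κ : Type*} [Fintype ι] [Fintype κ] [DecidableEq κ]
    (J : ι → κ) {k : ℕ} (hk : k ≠ 0) (hJ : ∀ j, #{i | J i = j} = k)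
    {p : κ → ℝ} (hp : ∀ j, 0 ≤ p j) (hp1 : ∑ j, p j = 1) {a : ι → ℝ} {b : κ → ℝ} {c : ℝ}
    (hab : ∀ i, a i - c ≤ b (J i)) :
    ∑ i, p (J i) * (k : ℝ)⁻¹ * a i - c ≤ ∑ j, p j * b j := by
  have hfiber : ∀ g : κ → ℝ, ∑ i, p (J i) * (k : ℝ)⁻¹ * g (J i) = ∑ j, p j * g j := by
    intro g
    rw [← sum_fiberwise' univ J fun j => p j * (k : ℝ)⁻¹ * g j]
    refine sum_congr rfl fun j _ => ?_
    rw [sum_const, hJ, nsmul_eq_mul]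
    field_simp
  calc ∑ i, p (J i) * (k : ℝ)⁻¹ * a i - c
      ≤ ∑ i, p (J i) * (k : ℝ)⁻¹ * (c + b (J i)) - c := by
        gcongr with i
        · exact mul_nonneg (hp _) (by positivity)
        · linarith [hab i]
    _ = ∑ j, p j * b j := by
        rw [hfiber fun j => c + b j]
        simp only [mul_add, sum_add_distrib, ← sum_mul, hp1, one_mul, add_sub_cancel_left]

namespace AdsagaState

variable {d n m : ℕ}

theorem step_x (gradf : Fin n → EuclideanSpace ℝ (Fin d) → EuclideanSpace ℝ (Fin d))
    (p : Fin m → ℝ) (pmin η : ℝ) (S : AdsagaState d n m) (j : Fin m) (i : Fin n) :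
    (step gradf p pmin η S j i).x = S.x - (η * pmin / p j) • (S.u j + S.abar) :=
  rfl

theorem sum_u_add_abar (S : AdsagaState d n m) : ∑ j, (S.u j + S.abar) = S.v := by
  rw [sum_add_distrib, sum_const, card_univ, Fintype.card_fin, ← Nat.cast_smul_eq_nsmul ℝ, v]

theorem norm_abar_sq_le (S : AdsagaState d n m) {c : Fin n → EuclideanSpace ℝ (Fin d)}
    (hc : ∑ i, c i = 0) : ‖S.abar‖ ^ 2 ≤ (1 / n : ℝ) * ∑ i, ‖S.alpha i - c i‖ ^ 2 := by
  have habar : S.abar = (1 / n : ℝ) • ∑ i, (S.alpha i - c i) := by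
    rw [abar, sum_sub_distrib, hc, sub_zero]
  calc ‖S.abar‖ ^ 2 = (1 / n : ℝ) ^ 2 * ‖∑ i, (S.alpha i - c i)‖ ^ 2 := by
        rw [habar, norm_smul, mul_pow, Real.norm_eq_abs, sq_abs]
    _ ≤ (1 / n : ℝ) ^ 2 * (n * ∑ i, ‖S.alpha i - c i‖ ^ 2) := by
        gcongr
        simpa using norm_sum_sq_le_card_mul univ fun i => S.alpha i - c i
    _ = (1 / n : ℝ) * ∑ i, ‖S.alpha i - c i‖ ^ 2 := by
        rcases Nat.eq_zero_or_pos n with rfl | hn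
        · simp
        · field_simp

theorem sum_norm_u_add_abar_sq_le (S : AdsagaState d n m) {c : Fin n → EuclideanSpace ℝ (Fin d)}
    (hc : ∑ i, c i = 0) :
    ∑ j, ‖S.u j + S.abar‖ ^ 2
      ≤ 2 * ∑ j, ‖S.u j‖ ^ 2 + (2 * m / n : ℝ) * ∑ i, ‖S.alpha i - c i‖ ^ 2 := by
  calc ∑ j, ‖S.u j + S.abar‖ ^ 2 ≤ ∑ j, (2 * ‖S.u j‖ ^ 2 + 2 * ‖S.abar‖ ^ 2) :=
        sum_le_sum fun j _ => norm_add_sq_le_two_mul _ _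
    _ = 2 * ∑ j, ‖S.u j‖ ^ 2 + 2 * m * ‖S.abar‖ ^ 2 := by
        rw [sum_add_distrib, ← mul_sum, sum_const, card_univ, Fintype.card_fin, nsmul_eq_mul]
        ring
    _ ≤ 2 * ∑ j, ‖S.u j‖ ^ 2 + 2 * m * ((1 / n : ℝ) * ∑ i, ‖S.alpha i - c i‖ ^ 2) := by
        gcongr
        exact S.norm_abar_sq_le hc
    _ = _ := by ring

end AdsagaState

theorem phi1_step_sub_le {d n m : ℕ} {f : Fin n → EuclideanSpace ℝ (Fin d) → ℝ}
    {gradf : Fin n → EuclideanSpace ℝ (Fin d) → EuclideanSpace ℝ (Fin d)} {Lf : ℝ}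
    (hgrad : ∀ i x, HasGradientAt (f i) (gradf i x) x)
    (hFsmooth : ∀ x y : EuclideanSpace ℝ (Fin d),
      ‖((1 : ℝ) / n) • (∑ i, gradf i x) - ((1 : ℝ) / n) • (∑ i, gradf i y)‖ ≤ Lf * ‖x - y‖)
    (xstar : EuclideanSpace ℝ (Fin d)) (p : Fin m → ℝ) (pmin : ℝ) {η : ℝ} (hη : 0 ≤ η)
    (S : AdsagaState d n m) (j : Fin m) (i : Fin n) :
    phi1 f xstar η (S.step gradf p pmin η j i) - phi1 f xstar η S
      ≤ 4 * m * η * (-(η * pmin / p j) * ⟪(1 / n : ℝ) • ∑ i, gradf i S.x, S.u j + S.abar⟫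
          + Lf / 2 * (η * pmin / p j) ^ 2 * ‖S.u j + S.abar‖ ^ 2) := by
  have hdescent := le_add_inner_add_of_lipschitz_gradient
    (fun x => HasGradientAt.const_mul_sum univ (1 / n : ℝ) fun i _ => hgrad i x) hFsmooth
    S.x (-((η * pmin / p j) • (S.u j + S.abar)))
  rw [← sub_eq_add_neg, ← AdsagaState.step_x gradf p pmin η S j i, inner_neg_right,
    real_inner_smul_right, norm_neg, norm_smul, mul_pow, Real.norm_eq_abs, sq_abs] at hdescent
  have := mul_le_mul_of_nonneg_left hdescent (by positivity : (0 : ℝ) ≤ 4 * m * η)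
  simp only [phi1]
  linarith

theorem mul_descent_bound_le {k η Lf p pmin a b : ℝ} (hk : 0 ≤ k) (hη : 0 ≤ η) (hLf : 0 ≤ Lf)
    (hpmin : 0 < pmin) (hp : pmin ≤ p) (hb : 0 ≤ b) :
    p * (4 * k * η * (-(η * pmin / p) * a + Lf / 2 * (η * pmin / p) ^ 2 * b))
      ≤ -(4 * k * η ^ 2 * pmin) * a + 2 * k * Lf * η ^ 3 * pmin * b := by
  have hp0 : 0 < p := hpmin.trans_le hp
  have hratio : pmin / p ≤ 1 := (div_le_one hp0).2 hp
  have hexpand : p * (4 * k * η * (-(η * pmin / p) * a + Lf / 2 * (η * pmin / p) ^ 2 * b))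
      = -(4 * k * η ^ 2 * pmin) * a + 2 * k * Lf * η ^ 3 * pmin * b * (pmin / p) := by
    field_simp
    ring
  rw [hexpand]
  have : 0 ≤ 2 * k * Lf * η ^ 3 * pmin * b := by positivity
  linarith [mul_le_mul_of_nonneg_left hratio this]

theorem adsaga_phi1_decrease_general
    {d n m : ℕ} (hn : 0 < n) (hm : 0 < m) (hmn : m ∣ n)
    (Lf : ℝ) (hLf : 0 < Lf)
    (f : Fin n → EuclideanSpace ℝ (Fin d) → ℝ)
    (gradf : Fin n → EuclideanSpace ℝ (Fin d) → EuclideanSpace ℝ (Fin d))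
    (hgrad : ∀ i x, HasGradientAt (f i) (gradf i x) x)
    (hFsmooth : ∀ x y : EuclideanSpace ℝ (Fin d),
      ‖((1 : ℝ) / n) • (∑ i, gradf i x) - ((1 : ℝ) / n) • (∑ i, gradf i y)‖ ≤ Lf * ‖x - y‖)
    (xstar : EuclideanSpace ℝ (Fin d))
    (hstarzero : (∑ i, gradf i xstar) = 0)
    (J : Fin n → Fin m)
    (hpart : ∀ j, (Finset.univ.filter (fun i => J i = j)).card = n / m)
    (p : Fin m → ℝ) (hp : ∀ j, 0 < p j) (hpsum : (∑ j, p j) = 1)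
    (pmin : ℝ)
    (hpmin : IsLeast (Set.range p) pmin)
    (η : ℝ) (hη : 0 < η)
    (S : AdsagaState d n m)
    :
    (∑ i : Fin n, p (J i) * ((m : ℝ) / n) * phi1 f xstar η (AdsagaState.step gradf p pmin η S (J i) i))
        - phi1 f xstar η S
      ≤ -(4 * (m : ℝ) * η ^ 2 * pmin / n) * ⟪S.v, ∑ i, gradf i S.x⟫
        + 4 * (m : ℝ) * Lf * η ^ 3 * pmin * (∑ j, ‖S.u j‖ ^ 2)
        + (4 * (m : ℝ) ^ 2 * Lf * η ^ 3 * pmin / n) *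
            (∑ i, ‖S.alpha i - gradf i xstar‖ ^ 2) := by
  have hpmin_pos : 0 < pmin := by
    obtain ⟨j₀, rfl⟩ := hpmin.1
    exact hp j₀
  have hweight : (m / n : ℝ) = ((n / m : ℕ) : ℝ)⁻¹ := by
    rw [Nat.cast_div hmn (by positivity), inv_div]
  rw [hweight]
  calc _ ≤ ∑ j, p j * (4 * m * η * (-(η * pmin / p j)
          * ⟪(1 / n : ℝ) • ∑ i, gradf i S.x, S.u j + S.abar⟫
          + Lf / 2 * (η * pmin / p j) ^ 2 * ‖S.u j + S.abar‖ ^ 2)) :=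
        sum_fiber_uniform_mul_sub_le J (Nat.div_pos (Nat.le_of_dvd hn hmn) hm).ne' hpart
          (fun j => (hp j).le) hpsum fun i =>
            phi1_step_sub_le hgrad hFsmooth xstar p pmin hη.le S (J i) i
    _ ≤ ∑ j, (-(4 * m * η ^ 2 * pmin) * ⟪(1 / n : ℝ) • ∑ i, gradf i S.x, S.u j + S.abar⟫
          + 2 * m * Lf * η ^ 3 * pmin * ‖S.u j + S.abar‖ ^ 2) :=
        sum_le_sum fun j _ => mul_descent_bound_le m.cast_nonneg hη.le hLf.le hpmin_pos
          (hpmin.2 ⟨j, rfl⟩) (sq_nonneg _)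
    _ = -(4 * m * η ^ 2 * pmin / n) * ⟪S.v, ∑ i, gradf i S.x⟫
          + 2 * m * Lf * η ^ 3 * pmin * ∑ j, ‖S.u j + S.abar‖ ^ 2 := by
        rw [sum_add_distrib, ← mul_sum, ← mul_sum, ← inner_sum, S.sum_u_add_abar,
          real_inner_smul_left, real_inner_comm]
        ring
    _ ≤ -(4 * m * η ^ 2 * pmin / n) * ⟪S.v, ∑ i, gradf i S.x⟫
          + 2 * m * Lf * η ^ 3 * pmin * (2 * ∑ j, ‖S.u j‖ ^ 2
            + (2 * m / n : ℝ) * ∑ i, ‖S.alpha i - gradf i xstar‖ ^ 2) := by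
        gcongr
        exact S.sum_norm_u_add_abar_sq_le hstarzero
    _ = _ := by ring

theorem adsaga_phi1_decrease
    {d n m : ℕ} (hd : 0 < d) (hn : 0 < n) (hm : 0 < m) (hmn : m ∣ n)
    (L Lf μ : ℝ) (hL : 0 < L) (hLf : 0 < Lf) (hμ : 0 < μ)
    (f : Fin n → EuclideanSpace ℝ (Fin d) → ℝ)
    (gradf : Fin n → EuclideanSpace ℝ (Fin d) → EuclideanSpace ℝ (Fin d))
    (hgrad : ∀ i x, HasGradientAt (f i) (gradf i x) x)
    (hconv : ∀ i, ConvexOn ℝ Set.univ (f i))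
    (hsmooth : ∀ i (x y : EuclideanSpace ℝ (Fin d)), ‖gradf i x - gradf i y‖ ≤ L * ‖x - y‖)
    (hFsmooth : ∀ x y : EuclideanSpace ℝ (Fin d),
      ‖((1 : ℝ) / n) • (∑ i, gradf i x) - ((1 : ℝ) / n) • (∑ i, gradf i y)‖ ≤ Lf * ‖x - y‖)
    (hFstrong : ∀ x y : EuclideanSpace ℝ (Fin d),
      μ * ‖x - y‖ ^ 2 ≤
        ⟪((1 : ℝ) / n) • (∑ i, gradf i x) - ((1 : ℝ) / n) • (∑ i, gradf i y), x - y⟫)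
    (xstar : EuclideanSpace ℝ (Fin d))
    (hmin : ∀ x : EuclideanSpace ℝ (Fin d),
      (((1 : ℝ) / n) * ∑ i, f i xstar) ≤ ((1 : ℝ) / n) * ∑ i, f i x)
    (hstarzero : (∑ i, gradf i xstar) = 0)
    (J : Fin n → Fin m)
    (hpart : ∀ j, (Finset.univ.filter (fun i => J i = j)).card = n / m)
    (p : Fin m → ℝ) (hp : ∀ j, 0 < p j) (hpsum : (∑ j, p j) = 1)
    (pmin pmax : ℝ)
    (hpmin : IsLeast (Set.range p) pmin) (hpmax : IsGreatest (Set.range p) pmax)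
    (η : ℝ) (hη : 0 < η)
    (S : AdsagaState d n m)
    (hidx : ∀ j, J (S.idx j) = j)
    (hinv : ∀ j, S.alpha (S.idx j) = S.beta j)
    :
    (∑ i : Fin n, p (J i) * ((m : ℝ) / n) * phi1 f xstar η (AdsagaState.step gradf p pmin η S (J i) i))
        - phi1 f xstar η S
      ≤ -(4 * (m : ℝ) * η ^ 2 * pmin / n) * ⟪S.v, ∑ i, gradf i S.x⟫
        + 4 * (m : ℝ) * Lf * η ^ 3 * pmin * (∑ j, ‖S.u j‖ ^ 2)
        + (4 * (m : ℝ) ^ 2 * Lf * η ^ 3 * pmin / n) *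
            (∑ i, ‖S.alpha i - gradf i xstar‖ ^ 2) :=
  adsaga_phi1_decrease_general hn hm hmn Lf hLf f gradf hgrad hFsmooth xstar hstarzero J hpart p hp
    hpsum pmin hpmin η hη S
end

section
/- For any ADSAGA state, E[φ3⁺] − φ3 ≤ −η²·c3·p_min·Σ_j ‖g*_j‖² + η²·c3·p_min·(m/n)·Σ_i ‖∇f_i(x) − ∇f_i(x*)‖², where φ3⁺ denotes the value of φ3 at the state produced by one step with choice (j, i). -/
open Finset
open scoped RealInnerProductSpace BigOperators

theorem adsaga_phi3_decrease
    {d n m : ℕ} (hd : 0 < d) (hn : 0 < n) (hm : 0 < m) (hmn : m ∣ n)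
    (L Lf μ : ℝ) (hL : 0 < L) (hLf : 0 < Lf) (hμ : 0 < μ)
    (f : Fin n → EuclideanSpace ℝ (Fin d) → ℝ)
    (gradf : Fin n → EuclideanSpace ℝ (Fin d) → EuclideanSpace ℝ (Fin d))
    (hgrad : ∀ i x, HasGradientAt (f i) (gradf i x) x)
    (hconv : ∀ i, ConvexOn ℝ Set.univ (f i))
    (hsmooth : ∀ i (x y : EuclideanSpace ℝ (Fin d)), ‖gradf i x - gradf i y‖ ≤ L * ‖x - y‖)
    (hFsmooth : ∀ x y : EuclideanSpace ℝ (Fin d),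
      ‖((1 : ℝ) / n) • (∑ i, gradf i x) - ((1 : ℝ) / n) • (∑ i, gradf i y)‖ ≤ Lf * ‖x - y‖)
    (hFstrong : ∀ x y : EuclideanSpace ℝ (Fin d),
      μ * ‖x - y‖ ^ 2 ≤
        ⟪((1 : ℝ) / n) • (∑ i, gradf i x) - ((1 : ℝ) / n) • (∑ i, gradf i y), x - y⟫)
    (xstar : EuclideanSpace ℝ (Fin d))
    (hmin : ∀ x : EuclideanSpace ℝ (Fin d),
      (((1 : ℝ) / n) * ∑ i, f i xstar) ≤ ((1 : ℝ) / n) * ∑ i, f i x)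
    (hstarzero : (∑ i, gradf i xstar) = 0)
    (J : Fin n → Fin m)
    (hpart : ∀ j, (Finset.univ.filter (fun i => J i = j)).card = n / m)
    (p : Fin m → ℝ) (hp : ∀ j, 0 < p j) (hpsum : (∑ j, p j) = 1)
    (pmin pmax : ℝ)
    (hpmin : IsLeast (Set.range p) pmin) (hpmax : IsGreatest (Set.range p) pmax)
    (η : ℝ) (hη : 0 < η)
    (S : AdsagaState d n m)
    (hidx : ∀ j, J (S.idx j) = j)
    (hinv : ∀ j, S.alpha (S.idx j) = S.beta j)
    (c3 c4 c5 : ℝ)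
    (hc5 : c5 = (16 / 3) * ((m : ℝ) * Lf * η + 1))
    (hc4 : c4 = (22 + 76 * ((m : ℝ) / n) * (pmax / pmin) ^ 2) * c5)
    (hc3 : c3 = (64 + 168 * ((m : ℝ) / n) * (pmax / pmin) ^ 2) * c5)
    :
    (∑ i : Fin n, p (J i) * ((m : ℝ) / n) * phi3 gradf xstar p pmin η c3 (AdsagaState.step gradf p pmin η S (J i) i))
        - phi3 gradf xstar p pmin η c3 S
      ≤ -(η ^ 2 * c3 * pmin) * (∑ j, ‖S.g j - gradf (S.idx j) xstar‖ ^ 2)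
        + η ^ 2 * c3 * pmin * ((m : ℝ) / n) * (∑ i, ‖gradf i S.x - gradf i xstar‖ ^ 2) := by
  classical
  have hn0 : (n : ℝ) ≠ 0 := Nat.cast_ne_zero.mpr hn.ne'
  have hm0 : (m : ℝ) ≠ 0 := Nat.cast_ne_zero.mpr hm.ne'
  have hpne : ∀ j, p j ≠ 0 := fun j => (hp j).ne'
  set k : ℕ := n / m with hkdef
  have hkm : (k * m : ℕ) = n := Nat.div_mul_cancel hmn
  have hk0 : (k : ℝ) ≠ 0 := by
    have : k ≠ 0 := by
      intro h
      rw [h, zero_mul] at hkm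
      omega
    exact_mod_cast Nat.cast_ne_zero.mpr this
  have hnR : (n : ℝ) = (k : ℝ) * m := by exact_mod_cast hkm.symm
  have hmk : ((m : ℝ) / n) * k = 1 := by
    rw [hnR]; field_simp
  -- fiberwise sum
  have hfib : ∀ F : Fin m → ℝ, (∑ i : Fin n, F (J i)) = (k : ℝ) * ∑ j, F j := by
    intro F
    rw [← Finset.sum_fiberwise' Finset.univ J F, Finset.mul_sum]
    refine Finset.sum_congr rfl fun j _ => ?_
    rw [Finset.sum_const, hpart j, nsmul_eq_mul]
  set A : Fin n → ℝ := fun i => ‖gradf i S.x - gradf i xstar‖ ^ 2 with hA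
  set B : Fin m → ℝ := fun j => ‖S.g j - gradf (S.idx j) xstar‖ ^ 2 with hB
  have hstep : ∀ i : Fin n,
      phi3 gradf xstar p pmin η c3 (AdsagaState.step gradf p pmin η S (J i) i)
        = phi3 gradf xstar p pmin η c3 S
          + η ^ 2 * c3 * ((pmin / p (J i)) * (A i - B (J i))) := by
    intro i
    unfold phi3 AdsagaState.step
    simp only
    have hterm : ∀ j : Fin m,
        (pmin / p j) * ‖Function.update S.g (J i) (gradf i S.x) j
            - gradf (Function.update S.idx (J i) i j) xstar‖ ^ 2
          = (pmin / p j) * ‖S.g j - gradf (S.idx j) xstar‖ ^ 2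
            + (if j = J i then (pmin / p (J i)) * (A i - B (J i)) else 0) := by
      intro j
      by_cases h : j = J i
      · subst h
        rw [if_pos rfl]
        simp only [Function.update_self, hA, hB]
        ring
      · rw [if_neg h, Function.update_of_ne h, Function.update_of_ne h, add_zero]
    rw [Finset.sum_congr rfl fun j _ => hterm j, Finset.sum_add_distrib,
      Finset.sum_ite_eq' Finset.univ (J i)
        (fun _ => (pmin / p (J i)) * (A i - B (J i)))]
    simp only [Finset.mem_univ, if_pos]
    ring
  have key : (∑ i : Fin n, p (J i) * ((m : ℝ) / n)
        * phi3 gradf xstar p pmin η c3 (AdsagaState.step gradf p pmin η S (J i) i))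
      = phi3 gradf xstar p pmin η c3 S
        + η ^ 2 * c3 * pmin * ((m : ℝ) / n) * (∑ i, A i)
        - η ^ 2 * c3 * pmin * (∑ j, B j) := by
    have h1 : (∑ i : Fin n, p (J i) * ((m : ℝ) / n)
          * phi3 gradf xstar p pmin η c3 (AdsagaState.step gradf p pmin η S (J i) i))
        = ∑ i : Fin n, (p (J i) * (((m : ℝ) / n) * phi3 gradf xstar p pmin η c3 S)
            + ((m : ℝ) / n) * (η ^ 2 * c3 * pmin) * (A i - B (J i))) := by
      refine Finset.sum_congr rfl fun i _ => ?_
      rw [hstep i]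
      have hc : p (J i) * (pmin / p (J i)) = pmin :=
        by rw [mul_div_assoc'] ; exact mul_div_cancel_left₀ pmin (hpne (J i))
      linear_combination (((m : ℝ) / n) * η ^ 2 * c3 * (A i - B (J i))) * hc
    rw [h1, Finset.sum_add_distrib, ← Finset.sum_mul,
      hfib p, hpsum, mul_one]
    have h2 : (∑ i : Fin n, ((m : ℝ) / n) * (η ^ 2 * c3 * pmin) * (A i - B (J i)))
        = ((m : ℝ) / n) * (η ^ 2 * c3 * pmin) * ((∑ i, A i) - (k : ℝ) * ∑ j, B j) := by
      rw [← Finset.mul_sum, Finset.sum_sub_distrib, hfib B]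
    rw [h2]
    have h3 : (k : ℝ) * (((m : ℝ) / n) * phi3 gradf xstar p pmin η c3 S)
        = phi3 gradf xstar p pmin η c3 S := by
      rw [← mul_assoc, mul_comm (k : ℝ) ((m : ℝ) / n), hmk, one_mul]
    rw [h3]
    linear_combination (-(η ^ 2 * c3 * pmin) * (∑ j, B j)) * hmk
  rw [key]
  apply le_of_eq
  ring
end

section
/- For any ADSAGA state, E[φ4⁺] − φ4 ≤ −(p_min·m/(4n))·φ4 − η²·(m·p_min·c4/(2n))·Σ_i ‖α*_i‖² − η²·(p_min·c4/4)·Σ_j ‖β*_j‖² + 2·η²·p_min·c4·Σ_j ‖g*_j‖², where φ4⁺ denotes the value of φ4 at the state produced by one step with choice (j, i). -/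
open Finset
open scoped RealInnerProductSpace BigOperators

private lemma sum_update_aux {ι : Type*} [Fintype ι] [DecidableEq ι] (F' F : ι → ℝ) (i0 : ι)
    (h : ∀ i, i ≠ i0 → F' i = F i) :
    (∑ i, F' i) = (∑ i, F i) + (F' i0 - F i0) := by
  rw [← Finset.add_sum_erase _ F' (Finset.mem_univ i0),
      ← Finset.add_sum_erase _ F (Finset.mem_univ i0),
      Finset.sum_congr rfl (fun i hi => h i (Finset.ne_of_mem_erase hi))]
  ring

private lemma final_ineq (η c4 pmin nR mR T Qb A B Gs : ℝ)
    (hη : 0 < η) (hc4 : 0 < c4) (hpmin : 0 < pmin) (hn : 0 < nR) (hm : 0 < mR) (hmn : mR ≤ nR)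
    (hT : T ≤ Qb + (A - B)) (hQb : Qb ≤ B) (hGs : 0 ≤ Gs) (hB : 0 ≤ B) :
    η ^ 2 * c4 * pmin * ((2 * Gs - B) - (mR / nR) * (A - B + Gs))
      ≤ -(pmin * mR / (4 * nR)) * (η ^ 2 * c4 * (2 * T - Qb))
        - η ^ 2 * (mR * pmin * c4 / (2 * nR)) * A - η ^ 2 * (pmin * c4 / 4) * B
        + 2 * η ^ 2 * pmin * c4 * Gs := by
  have hκ : 0 ≤ mR / nR := by positivity
  have hκ1 : mR / nR ≤ 1 := (div_le_one hn).2 hmn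
  have hfac : 0 ≤ η ^ 2 * c4 * pmin := by positivity
  have hX : (2 * Gs - B) - (mR / nR) * (A - B + Gs)
      ≤ -(mR / nR) / 4 * (2 * T - Qb) - (mR / nR) / 2 * A - B / 4 + 2 * Gs := by
    nlinarith [mul_nonneg hκ (by linarith : (0:ℝ) ≤ Qb + (A - B) - T),
               mul_nonneg hκ (by linarith : (0:ℝ) ≤ B - Qb),
               mul_nonneg (by linarith : (0:ℝ) ≤ 1 - mR / nR) hB,
               mul_nonneg hκ hGs]
  calc η ^ 2 * c4 * pmin * ((2 * Gs - B) - (mR / nR) * (A - B + Gs))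
      ≤ η ^ 2 * c4 * pmin * (-(mR / nR) / 4 * (2 * T - Qb) - (mR / nR) / 2 * A - B / 4 + 2 * Gs) :=
        mul_le_mul_of_nonneg_left hX hfac
    _ = -(pmin * mR / (4 * nR)) * (η ^ 2 * c4 * (2 * T - Qb))
        - η ^ 2 * (mR * pmin * c4 / (2 * nR)) * A - η ^ 2 * (pmin * c4 / 4) * B
        + 2 * η ^ 2 * pmin * c4 * Gs := by
      field_simp

theorem adsaga_phi4_decrease
    {d n m : ℕ} (hd : 0 < d) (hn : 0 < n) (hm : 0 < m) (hmn : m ∣ n)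
    (L Lf μ : ℝ) (hL : 0 < L) (hLf : 0 < Lf) (hμ : 0 < μ)
    (f : Fin n → EuclideanSpace ℝ (Fin d) → ℝ)
    (gradf : Fin n → EuclideanSpace ℝ (Fin d) → EuclideanSpace ℝ (Fin d))
    (hgrad : ∀ i x, HasGradientAt (f i) (gradf i x) x)
    (hconv : ∀ i, ConvexOn ℝ Set.univ (f i))
    (hsmooth : ∀ i (x y : EuclideanSpace ℝ (Fin d)), ‖gradf i x - gradf i y‖ ≤ L * ‖x - y‖)
    (hFsmooth : ∀ x y : EuclideanSpace ℝ (Fin d),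
      ‖((1 : ℝ) / n) • (∑ i, gradf i x) - ((1 : ℝ) / n) • (∑ i, gradf i y)‖ ≤ Lf * ‖x - y‖)
    (hFstrong : ∀ x y : EuclideanSpace ℝ (Fin d),
      μ * ‖x - y‖ ^ 2 ≤
        ⟪((1 : ℝ) / n) • (∑ i, gradf i x) - ((1 : ℝ) / n) • (∑ i, gradf i y), x - y⟫)
    (xstar : EuclideanSpace ℝ (Fin d))
    (hmin : ∀ x : EuclideanSpace ℝ (Fin d),
      (((1 : ℝ) / n) * ∑ i, f i xstar) ≤ ((1 : ℝ) / n) * ∑ i, f i x)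
    (hstarzero : (∑ i, gradf i xstar) = 0)
    (J : Fin n → Fin m)
    (hpart : ∀ j, (Finset.univ.filter (fun i => J i = j)).card = n / m)
    (p : Fin m → ℝ) (hp : ∀ j, 0 < p j) (hpsum : (∑ j, p j) = 1)
    (pmin pmax : ℝ)
    (hpmin : IsLeast (Set.range p) pmin) (hpmax : IsGreatest (Set.range p) pmax)
    (η : ℝ) (hη : 0 < η)
    (S : AdsagaState d n m)
    (hidx : ∀ j, J (S.idx j) = j)
    (hinv : ∀ j, S.alpha (S.idx j) = S.beta j)
    (c3 c4 c5 : ℝ)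
    (hc5 : c5 = (16 / 3) * ((m : ℝ) * Lf * η + 1))
    (hc4 : c4 = (22 + 76 * ((m : ℝ) / n) * (pmax / pmin) ^ 2) * c5)
    (hc3 : c3 = (64 + 168 * ((m : ℝ) / n) * (pmax / pmin) ^ 2) * c5)
    :
    (∑ i : Fin n, p (J i) * ((m : ℝ) / n) * phi4 gradf xstar J p pmin η c4 (AdsagaState.step gradf p pmin η S (J i) i))
        - phi4 gradf xstar J p pmin η c4 S
      ≤ -(pmin * (m : ℝ) / (4 * n)) * phi4 gradf xstar J p pmin η c4 S
        - η ^ 2 * ((m : ℝ) * pmin * c4 / (2 * n)) * (∑ i, ‖S.alpha i - gradf i xstar‖ ^ 2)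
        - η ^ 2 * (pmin * c4 / 4) * (∑ j, ‖S.beta j - gradf (S.idx j) xstar‖ ^ 2)
        + 2 * η ^ 2 * pmin * c4 * (∑ j, ‖S.g j - gradf (S.idx j) xstar‖ ^ 2) := by
  obtain ⟨j0, hj0⟩ := hpmin.1
  have hpminpos : 0 < pmin := hj0 ▸ hp j0
  have hple : ∀ j, pmin ≤ p j := fun j => hpmin.2 ⟨j, rfl⟩
  have hnR : (0:ℝ) < (n:ℝ) := by exact_mod_cast hn
  have hmR : (0:ℝ) < (m:ℝ) := by exact_mod_cast hm
  have hn0 : (n:ℝ) ≠ 0 := hnR.ne'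
  have hm0 : (m:ℝ) ≠ 0 := hmR.ne'
  have hc4pos : 0 < c4 := by rw [hc4, hc5]; positivity
  have hmlen : (m:ℝ) ≤ (n:ℝ) := by exact_mod_cast Nat.le_of_dvd hn hmn
  have hinj : Function.Injective S.idx := fun j j' h => by
    have h2 := congrArg J h; rwa [hidx, hidx] at h2
  have hcard : ∀ j : Fin m, ((Finset.univ.filter (fun i => J i = j)).card : ℝ) = (n:ℝ)/(m:ℝ) := by
    intro j
    rw [hpart j, Nat.cast_div hmn (by exact_mod_cast hm.ne')]
  have hcomp : ∀ w : Fin m → ℝ, (∑ i, w (J i)) = ((n:ℝ)/(m:ℝ)) * ∑ j, w j := by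
    intro w
    rw [← Finset.sum_fiberwise' Finset.univ J w, Finset.mul_sum]
    refine Finset.sum_congr rfl fun j _ => ?_
    rw [Finset.sum_const, nsmul_eq_mul, hcard j]
  have himg : Finset.univ.filter (fun i => i = S.idx (J i)) = Finset.univ.image S.idx := by
    ext i
    simp only [Finset.mem_filter, Finset.mem_image, Finset.mem_univ, true_and]
    constructor
    · intro h; exact ⟨J i, h.symm⟩
    · rintro ⟨j, rfl⟩; rw [hidx]
  have hsum_image : ∀ w : Fin n → ℝ,
      (∑ i ∈ Finset.univ.image S.idx, w i) = ∑ j, w (S.idx j) :=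
    fun w => Finset.sum_image (fun x _ y _ h => hinj h)
  set Nb : Fin n → ℝ := fun i =>
      if i = S.idx (J i) then ‖S.g (J i) - gradf (S.idx (J i)) xstar‖ ^ 2
      else ‖S.alpha i - gradf i xstar‖ ^ 2 with hNb_def
  have key : ∀ i : Fin n,
      phi4 gradf xstar J p pmin η c4 (AdsagaState.step gradf p pmin η S (J i) i)
      = phi4 gradf xstar J p pmin η c4 S
        + η ^ 2 * c4 * ((pmin / p (J i)) *
            (2 * ‖S.g (J i) - gradf (S.idx (J i)) xstar‖ ^ 2
              - ‖S.beta (J i) - gradf (S.idx (J i)) xstar‖ ^ 2 - Nb i)) := by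
    intro i
    have hAe : (∑ i', (pmin / p (J i')) *
          ‖Function.update S.alpha (S.idx (J i)) (S.g (J i)) i' - gradf i' xstar‖ ^ 2)
        = (∑ i', (pmin / p (J i')) * ‖S.alpha i' - gradf i' xstar‖ ^ 2)
          + ((pmin / p (J i)) * ‖S.g (J i) - gradf (S.idx (J i)) xstar‖ ^ 2
            - (pmin / p (J i)) * ‖S.beta (J i) - gradf (S.idx (J i)) xstar‖ ^ 2) := by
      rw [sum_update_aux
          (fun i' => (pmin / p (J i')) *
            ‖Function.update S.alpha (S.idx (J i)) (S.g (J i)) i' - gradf i' xstar‖ ^ 2)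
          (fun i' => (pmin / p (J i')) * ‖S.alpha i' - gradf i' xstar‖ ^ 2)
          (S.idx (J i)) (fun i' hi' => by simp only [Function.update_of_ne hi'])]
      simp only [Function.update_self, hidx (J i), hinv (J i)]
    have hBe : (∑ j', (pmin / p j') *
          ‖Function.update S.beta (J i) (if i = S.idx (J i) then S.g (J i) else S.alpha i) j'
            - gradf (Function.update S.idx (J i) i j') xstar‖ ^ 2)
        = (∑ j', (pmin / p j') * ‖S.beta j' - gradf (S.idx j') xstar‖ ^ 2)
          + ((pmin / p (J i)) * Nb i
            - (pmin / p (J i)) * ‖S.beta (J i) - gradf (S.idx (J i)) xstar‖ ^ 2) := by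
      rw [sum_update_aux
          (fun j' => (pmin / p j') *
            ‖Function.update S.beta (J i) (if i = S.idx (J i) then S.g (J i) else S.alpha i) j'
              - gradf (Function.update S.idx (J i) i j') xstar‖ ^ 2)
          (fun j' => (pmin / p j') * ‖S.beta j' - gradf (S.idx j') xstar‖ ^ 2)
          (J i) (fun j' hj' => by simp only [Function.update_of_ne hj'])]
      simp only [Function.update_self, hNb_def]
      by_cases h : i = S.idx (J i)
      · simp only [if_pos h]
        rw [← h]
      · simp only [if_neg h]
    simp only [phi4, AdsagaState.step]
    rw [hAe, hBe]
    ring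
  have hpq : ∀ j, p j * (pmin / p j) = pmin := fun j => by
    have := (hp j).ne'; field_simp
  have hsimp : ∀ i : Fin n,
      p (J i) * ((m:ℝ)/(n:ℝ)) * phi4 gradf xstar J p pmin η c4 (AdsagaState.step gradf p pmin η S (J i) i)
      = p (J i) * ((m:ℝ)/(n:ℝ)) * phi4 gradf xstar J p pmin η c4 S
        + ((m:ℝ)/(n:ℝ)) * (η ^ 2 * c4 * pmin) *
            (2 * ‖S.g (J i) - gradf (S.idx (J i)) xstar‖ ^ 2
              - ‖S.beta (J i) - gradf (S.idx (J i)) xstar‖ ^ 2 - Nb i) := by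
    intro i
    rw [key i]
    linear_combination ((m:ℝ)/(n:ℝ)) * (η ^ 2 * c4) *
      (2 * ‖S.g (J i) - gradf (S.idx (J i)) xstar‖ ^ 2
        - ‖S.beta (J i) - gradf (S.idx (J i)) xstar‖ ^ 2 - Nb i) * hpq (J i)
  have hNbsum : (∑ i, Nb i)
      = (∑ i, ‖S.alpha i - gradf i xstar‖ ^ 2)
        - (∑ j, ‖S.beta j - gradf (S.idx j) xstar‖ ^ 2)
        + ∑ j, ‖S.g j - gradf (S.idx j) xstar‖ ^ 2 := by
    have h1 : ∀ i : Fin n, Nb i = ‖S.alpha i - gradf i xstar‖ ^ 2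
        + (if i = S.idx (J i) then ‖S.g (J i) - gradf (S.idx (J i)) xstar‖ ^ 2
            - ‖S.alpha i - gradf i xstar‖ ^ 2 else 0) := by
      intro i; simp only [hNb_def]
      by_cases h : i = S.idx (J i)
      · rw [if_pos h, if_pos h]; ring
      · rw [if_neg h, if_neg h]; ring
    rw [Finset.sum_congr rfl (fun i _ => h1 i), Finset.sum_add_distrib,
        ← Finset.sum_filter, himg, hsum_image]
    have h2 : ∀ j : Fin m, ‖S.g (J (S.idx j)) - gradf (S.idx (J (S.idx j))) xstar‖ ^ 2
          - ‖S.alpha (S.idx j) - gradf (S.idx j) xstar‖ ^ 2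
        = ‖S.g j - gradf (S.idx j) xstar‖ ^ 2 - ‖S.beta j - gradf (S.idx j) xstar‖ ^ 2 := by
      intro j; rw [hidx j, hinv j]
    rw [Finset.sum_congr rfl (fun j _ => h2 j), Finset.sum_sub_distrib]
    ring
  have hQbB : (∑ j, (pmin / p j) * ‖S.beta j - gradf (S.idx j) xstar‖ ^ 2)
      ≤ ∑ j, ‖S.beta j - gradf (S.idx j) xstar‖ ^ 2 :=
    Finset.sum_le_sum fun j _ =>
      mul_le_of_le_one_left (by positivity) ((div_le_one (hp j)).2 (hple j))
  have hTsplit : (∑ i, (pmin / p (J i)) * ‖S.alpha i - gradf i xstar‖ ^ 2)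
      ≤ (∑ j, (pmin / p j) * ‖S.beta j - gradf (S.idx j) xstar‖ ^ 2)
        + ((∑ i, ‖S.alpha i - gradf i xstar‖ ^ 2)
          - ∑ j, ‖S.beta j - gradf (S.idx j) xstar‖ ^ 2) := by
    have hsub : Finset.univ.image S.idx ⊆ Finset.univ := Finset.subset_univ _
    have e1 : (∑ i, (pmin / p (J i)) * ‖S.alpha i - gradf i xstar‖ ^ 2)
        = (∑ i ∈ Finset.univ \ Finset.univ.image S.idx,
              (pmin / p (J i)) * ‖S.alpha i - gradf i xstar‖ ^ 2)
          + ∑ i ∈ Finset.univ.image S.idx,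
              (pmin / p (J i)) * ‖S.alpha i - gradf i xstar‖ ^ 2 :=
      (Finset.sum_sdiff hsub).symm
    have e2 : (∑ i, ‖S.alpha i - gradf i xstar‖ ^ 2)
        = (∑ i ∈ Finset.univ \ Finset.univ.image S.idx, ‖S.alpha i - gradf i xstar‖ ^ 2)
          + ∑ i ∈ Finset.univ.image S.idx, ‖S.alpha i - gradf i xstar‖ ^ 2 :=
      (Finset.sum_sdiff hsub).symm
    have e3 : (∑ i ∈ Finset.univ.image S.idx,
          (pmin / p (J i)) * ‖S.alpha i - gradf i xstar‖ ^ 2)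
        = ∑ j, (pmin / p j) * ‖S.beta j - gradf (S.idx j) xstar‖ ^ 2 := by
      rw [hsum_image]
      exact Finset.sum_congr rfl fun j _ => by rw [hidx j, hinv j]
    have e4 : (∑ i ∈ Finset.univ.image S.idx, ‖S.alpha i - gradf i xstar‖ ^ 2)
        = ∑ j, ‖S.beta j - gradf (S.idx j) xstar‖ ^ 2 := by
      rw [hsum_image]
      exact Finset.sum_congr rfl fun j _ => by rw [hinv j]
    have e5 : (∑ i ∈ Finset.univ \ Finset.univ.image S.idx,
          (pmin / p (J i)) * ‖S.alpha i - gradf i xstar‖ ^ 2)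
        ≤ ∑ i ∈ Finset.univ \ Finset.univ.image S.idx, ‖S.alpha i - gradf i xstar‖ ^ 2 :=
      Finset.sum_le_sum fun i _ =>
        mul_le_of_le_one_left (by positivity) ((div_le_one (hp _)).2 (hple _))
    rw [e1, e3]
    have := e2
    linarith [e5, e2.symm, e4]
  have e3 : (∑ i, p (J i) * ((m:ℝ)/(n:ℝ)) * phi4 gradf xstar J p pmin η c4 S)
      = (∑ i, p (J i)) * (((m:ℝ)/(n:ℝ)) * phi4 gradf xstar J p pmin η c4 S) := by
    rw [Finset.sum_mul]
    exact Finset.sum_congr rfl fun i _ => by ring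
  have e4 : (∑ i, p (J i)) = (n:ℝ)/(m:ℝ) := by rw [hcomp p, hpsum, mul_one]
  have e6 : (∑ i, (2 * ‖S.g (J i) - gradf (S.idx (J i)) xstar‖ ^ 2
        - ‖S.beta (J i) - gradf (S.idx (J i)) xstar‖ ^ 2))
      = ((n:ℝ)/(m:ℝ)) * ∑ j, (2 * ‖S.g j - gradf (S.idx j) xstar‖ ^ 2
        - ‖S.beta j - gradf (S.idx j) xstar‖ ^ 2) :=
    hcomp (fun j => 2 * ‖S.g j - gradf (S.idx j) xstar‖ ^ 2
      - ‖S.beta j - gradf (S.idx j) xstar‖ ^ 2)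
  have e7 : (∑ i, (2 * ‖S.g (J i) - gradf (S.idx (J i)) xstar‖ ^ 2
        - ‖S.beta (J i) - gradf (S.idx (J i)) xstar‖ ^ 2))
      = ((n:ℝ)/(m:ℝ)) * (2 * (∑ j, ‖S.g j - gradf (S.idx j) xstar‖ ^ 2)
        - ∑ j, ‖S.beta j - gradf (S.idx j) xstar‖ ^ 2) := by
    rw [e6, Finset.sum_sub_distrib, ← Finset.mul_sum]
  have hLHSeq : (∑ i, p (J i) * ((m:ℝ)/(n:ℝ)) *
        phi4 gradf xstar J p pmin η c4 (AdsagaState.step gradf p pmin η S (J i) i))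
      = phi4 gradf xstar J p pmin η c4 S
        + η ^ 2 * c4 * pmin * ((2 * (∑ j, ‖S.g j - gradf (S.idx j) xstar‖ ^ 2)
            - ∑ j, ‖S.beta j - gradf (S.idx j) xstar‖ ^ 2)
          - ((m:ℝ)/(n:ℝ)) * ((∑ i, ‖S.alpha i - gradf i xstar‖ ^ 2)
            - (∑ j, ‖S.beta j - gradf (S.idx j) xstar‖ ^ 2)
            + ∑ j, ‖S.g j - gradf (S.idx j) xstar‖ ^ 2)) := by
    rw [Finset.sum_congr rfl (fun i _ => hsimp i), Finset.sum_add_distrib, e3, e4,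
        ← Finset.mul_sum, Finset.sum_sub_distrib, e7, hNbsum]
    field_simp
  have hfin := final_ineq η c4 pmin (n:ℝ) (m:ℝ)
      (∑ i, (pmin / p (J i)) * ‖S.alpha i - gradf i xstar‖ ^ 2)
      (∑ j, (pmin / p j) * ‖S.beta j - gradf (S.idx j) xstar‖ ^ 2)
      (∑ i, ‖S.alpha i - gradf i xstar‖ ^ 2)
      (∑ j, ‖S.beta j - gradf (S.idx j) xstar‖ ^ 2)
      (∑ j, ‖S.g j - gradf (S.idx j) xstar‖ ^ 2)
      hη hc4pos hpminpos hnR hmR hmlen hTsplit hQbB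
      (Finset.sum_nonneg fun j _ => by positivity)
      (Finset.sum_nonneg fun j _ => by positivity)
  have hphi4S : phi4 gradf xstar J p pmin η c4 S
      = η ^ 2 * c4 * (2 * (∑ i, (pmin / p (J i)) * ‖S.alpha i - gradf i xstar‖ ^ 2)
          - ∑ j, (pmin / p j) * ‖S.beta j - gradf (S.idx j) xstar‖ ^ 2) := rfl
  rw [hLHSeq, hphi4S]
  linarith [hfin]
end

section
/- For any ADSAGA state, E[φ5⁺] − φ5 ≤ c5·η²·( −p_min·Σ_j ‖u_j‖² + (4·m·p_min/n)·Σ_i ( ‖∇f_i(x) − ∇f_i(x*)‖² + ‖α*_i‖² ) + (16·m/(n·p_min))·Σ_j p_j²·( ‖g*_j‖² + ‖β*_j‖² ) ), where φ5⁺ denotes the value of φ5 at the state produced by one step with choice (j, i). -/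
open Finset
open scoped RealInnerProductSpace BigOperators

section AuxLemmas

variable {E : Type*} [NormedAddCommGroup E] [InnerProductSpace ℝ E]

lemma adsaga_aux_combo (q : ℝ) (hq0 : 0 ≤ q) (hq1 : q ≤ 1) (u z : E) :
    ‖(1 - q) • u + q • z‖ ^ 2 ≤ (1 - q) * ‖u‖ ^ 2 + q * ‖z‖ ^ 2 := by
  have h := norm_add_sq_real ((1 - q) • u) (q • z)
  have hin : ⟪(1 - q) • u, q • z⟫ = (1 - q) * (q * ⟪u, z⟫) := by
    rw [real_inner_smul_left, real_inner_smul_right]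
  have h3 : ‖(1 - q) • u‖ = (1 - q) * ‖u‖ := by
    rw [norm_smul, Real.norm_eq_abs, abs_of_nonneg (by linarith)]
  have h4 : ‖q • z‖ = q * ‖z‖ := by
    rw [norm_smul, Real.norm_eq_abs, abs_of_nonneg hq0]
  have h2 : ⟪u, z⟫ ≤ ‖u‖ * ‖z‖ := real_inner_le_norm u z
  have h5 : 0 ≤ (1 - q) * q * (‖u‖ ^ 2 + ‖z‖ ^ 2 - 2 * ⟪u, z⟫) := by
    apply mul_nonneg (mul_nonneg (by linarith) hq0)
    nlinarith [sq_nonneg (‖u‖ - ‖z‖)]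
  rw [h, hin, h3, h4]
  nlinarith [h5]

lemma adsaga_aux_sub (a b : E) : ‖a - b‖ ^ 2 ≤ 2 * ‖a‖ ^ 2 + 2 * ‖b‖ ^ 2 := by
  have h := norm_sub_le a b
  nlinarith [norm_nonneg (a - b), norm_nonneg a, norm_nonneg b, sq_nonneg (‖a‖ - ‖b‖)]

lemma adsaga_aux_sub3 (a b c : E) : ‖a - b‖ ^ 2 ≤ 2 * ‖a - c‖ ^ 2 + 2 * ‖b - c‖ ^ 2 := by
  have h : a - b = (a - c) - (b - c) := by abel
  rw [h]
  exact adsaga_aux_sub _ _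

end AuxLemmas

set_option maxHeartbeats 1600000 in
theorem adsaga_phi5_decrease
    {d n m : ℕ} (hd : 0 < d) (hn : 0 < n) (hm : 0 < m) (hmn : m ∣ n)
    (L Lf μ : ℝ) (hL : 0 < L) (hLf : 0 < Lf) (hμ : 0 < μ)
    (f : Fin n → EuclideanSpace ℝ (Fin d) → ℝ)
    (gradf : Fin n → EuclideanSpace ℝ (Fin d) → EuclideanSpace ℝ (Fin d))
    (hgrad : ∀ i x, HasGradientAt (f i) (gradf i x) x)
    (hconv : ∀ i, ConvexOn ℝ Set.univ (f i))
    (hsmooth : ∀ i (x y : EuclideanSpace ℝ (Fin d)), ‖gradf i x - gradf i y‖ ≤ L * ‖x - y‖)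
    (hFsmooth : ∀ x y : EuclideanSpace ℝ (Fin d),
      ‖((1 : ℝ) / n) • (∑ i, gradf i x) - ((1 : ℝ) / n) • (∑ i, gradf i y)‖ ≤ Lf * ‖x - y‖)
    (hFstrong : ∀ x y : EuclideanSpace ℝ (Fin d),
      μ * ‖x - y‖ ^ 2 ≤
        ⟪((1 : ℝ) / n) • (∑ i, gradf i x) - ((1 : ℝ) / n) • (∑ i, gradf i y), x - y⟫)
    (xstar : EuclideanSpace ℝ (Fin d))
    (hmin : ∀ x : EuclideanSpace ℝ (Fin d),
      (((1 : ℝ) / n) * ∑ i, f i xstar) ≤ ((1 : ℝ) / n) * ∑ i, f i x)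
    (hstarzero : (∑ i, gradf i xstar) = 0)
    (J : Fin n → Fin m)
    (hpart : ∀ j, (Finset.univ.filter (fun i => J i = j)).card = n / m)
    (p : Fin m → ℝ) (hp : ∀ j, 0 < p j) (hpsum : (∑ j, p j) = 1)
    (pmin pmax : ℝ)
    (hpmin : IsLeast (Set.range p) pmin) (hpmax : IsGreatest (Set.range p) pmax)
    (η : ℝ) (hη : 0 < η)
    (S : AdsagaState d n m)
    (hidx : ∀ j, J (S.idx j) = j)
    (hinv : ∀ j, S.alpha (S.idx j) = S.beta j)
    (c3 c4 c5 : ℝ)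
    (hc5 : c5 = (16 / 3) * ((m : ℝ) * Lf * η + 1))
    (hc4 : c4 = (22 + 76 * ((m : ℝ) / n) * (pmax / pmin) ^ 2) * c5)
    (hc3 : c3 = (64 + 168 * ((m : ℝ) / n) * (pmax / pmin) ^ 2) * c5)
    :
    (∑ i : Fin n, p (J i) * ((m : ℝ) / n) * phi5 η c5 (AdsagaState.step gradf p pmin η S (J i) i))
        - phi5 η c5 S
      ≤ c5 * η ^ 2 *
          (-(pmin * ∑ j, ‖S.u j‖ ^ 2)
            + (4 * (m : ℝ) * pmin / n) *
                (∑ i, (‖gradf i S.x - gradf i xstar‖ ^ 2 + ‖S.alpha i - gradf i xstar‖ ^ 2))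
            + (16 * (m : ℝ) / (n * pmin)) *
                (∑ j, (p j) ^ 2 *
                  (‖S.g j - gradf (S.idx j) xstar‖ ^ 2
                    + ‖S.beta j - gradf (S.idx j) xstar‖ ^ 2))) := by
  -- basic positivity facts
  have hN : (0:ℝ) < (n:ℝ) := by exact_mod_cast hn
  have hM : (0:ℝ) < (m:ℝ) := by exact_mod_cast hm
  have hMN : (m:ℝ) ≤ (n:ℝ) := by exact_mod_cast Nat.le_of_dvd hn hmn
  set s : ℝ := (m:ℝ) / (n:ℝ) with hs_def
  have hs0 : 0 < s := div_pos hM hN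
  have hs1 : s ≤ 1 := by
    rw [hs_def, div_le_one hN]; exact hMN
  obtain ⟨j0, hj0⟩ := hpmin.1
  have hpmin0 : 0 < pmin := hj0 ▸ hp j0
  have hple : ∀ j, pmin ≤ p j := fun j => hpmin.2 ⟨j, rfl⟩
  have hc5pos : 0 < c5 := by
    rw [hc5]; positivity
  have hcast : ((n / m : ℕ) : ℝ) = (n:ℝ) / (m:ℝ) :=
    Nat.cast_div hmn (by exact_mod_cast hm.ne')
  -- fiberwise sum
  have fiber : ∀ F : Fin m → ℝ, ∑ i, F (J i) = ((n:ℝ) / (m:ℝ)) * ∑ j, F j := by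
    intro F
    rw [← Finset.sum_fiberwise Finset.univ J (fun i => F (J i)), Finset.mul_sum]
    refine Finset.sum_congr rfl (fun j _ => ?_)
    rw [Finset.sum_congr rfl (fun i hi => ?_), Finset.sum_const, hpart j,
      nsmul_eq_mul, hcast]
    have : J i = j := (Finset.mem_filter.1 hi).2
    rw [this]
  have sumOne : ∑ i, p (J i) * s = 1 := by
    rw [← Finset.sum_mul, fiber p, hpsum, hs_def]
    field_simp
  -- abbreviations
  set G : Fin n → ℝ := fun i => ‖gradf i S.x - gradf i xstar‖ ^ 2 with hG_def
  set A : Fin n → ℝ := fun i => ‖S.alpha i - gradf i xstar‖ ^ 2 with hA_def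
  set Gs : Fin m → ℝ := fun j => ‖S.g j - gradf (S.idx j) xstar‖ ^ 2 with hGs_def
  set Bs : Fin m → ℝ := fun j => ‖S.beta j - gradf (S.idx j) xstar‖ ^ 2 with hBs_def
  clear_value G A Gs Bs
  set E : Fin n → ℝ := fun i => if i = S.idx (J i) then Gs (J i) else A i with hE_def
  set K : Fin m → ℝ := fun j => 4 * s * (p j ^ 2 / pmin) * (Gs j + Bs j) with hK_def
  clear_value E K
  set Uu : Fin n → EuclideanSpace ℝ (Fin d) := fun i =>
    (1 - pmin / p (J i)) • S.u (J i)
      + (pmin / p (J i)) • (gradf i S.x - (if i = S.idx (J i) then S.g (J i) else S.alpha i))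
      - ((m : ℝ) / n * (1 - pmin / p (J i))) • S.hvec (J i) with hUu_def
  have hGnn : ∀ i, 0 ≤ G i := fun i => by simp only [hG_def]; exact sq_nonneg _
  have hAnn : ∀ i, 0 ≤ A i := fun i => by simp only [hA_def]; exact sq_nonneg _
  have hGsnn : ∀ j, 0 ≤ Gs j := fun j => by simp only [hGs_def]; exact sq_nonneg _
  have hBsnn : ∀ j, 0 ≤ Bs j := fun j => by simp only [hBs_def]; exact sq_nonneg _
  -- phi5 after one step
  have hphi5step : ∀ i, phi5 η c5 (AdsagaState.step gradf p pmin η S (J i) i)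
      = η ^ 2 * c5 * ((∑ j, ‖S.u j‖ ^ 2) - ‖S.u (J i)‖ ^ 2 + ‖Uu i‖ ^ 2) := by
    intro i
    have hu : (AdsagaState.step gradf p pmin η S (J i) i).u
        = Function.update S.u (J i) (Uu i) := rfl
    rw [phi5, hu]
    congr 1
    have h1 : ∑ j', ‖(Function.update S.u (J i) (Uu i)) j'‖ ^ 2
        = ‖Uu i‖ ^ 2 + ∑ j' ∈ Finset.univ.erase (J i), ‖S.u j'‖ ^ 2 := by
      rw [← Finset.add_sum_erase Finset.univ
        (fun j' => ‖(Function.update S.u (J i) (Uu i)) j'‖ ^ 2) (Finset.mem_univ (J i))]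
      congr 1
      · rw [Function.update_self]
      · refine Finset.sum_congr rfl (fun j' hj' => ?_)
        rw [Function.update_of_ne (Finset.ne_of_mem_erase hj')]
    have h2 := Finset.add_sum_erase Finset.univ (fun j => ‖S.u j‖ ^ 2)
      (Finset.mem_univ (J i))
    rw [h1]
    linarith
  clear_value Uu
  -- per-i core inequality
  have claim : ∀ i : Fin n,
      p (J i) * s * (‖Uu i‖ ^ 2 - ‖S.u (J i)‖ ^ 2)
        ≤ -(pmin * s * ‖S.u (J i)‖ ^ 2) + 4 * s * pmin * (G i + E i) + s * K (J i) := by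
    intro i
    set j := J i with hj_def
    set pj := p j with hpj_def
    have hpj0 : 0 < pj := hp j
    set q : ℝ := pmin / pj with hq_def
    have hq0 : 0 < q := div_pos hpmin0 hpj0
    have hq1 : q ≤ 1 := by
      rw [hq_def, div_le_one hpj0]; exact hple j
    set t : ℝ := s * (1 - q) / q with ht_def
    have ht0 : 0 ≤ t := by
      apply div_nonneg _ hq0.le
      exact mul_nonneg hs0.le (by linarith)
    set uvec := S.u j with hu_def
    set avec := gradf i S.x with ha_def
    set bvec := (if i = S.idx j then S.g j else S.alpha i) with hb_def
    set hvecj := S.hvec j with hh_def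
    set zvec := (avec - bvec) - t • hvecj with hz_def
    -- decomposition of Uu i
    have hdecomp : Uu i = (1 - q) • uvec + q • zvec := by
      have hqt : q • (t • hvecj) = (s * (1 - q)) • hvecj := by
        rw [smul_smul]
        congr 1
        rw [ht_def]
        field_simp
      rw [hUu_def]
      show (1 - q) • uvec + q • (avec - bvec) - (s * (1 - q)) • hvecj
        = (1 - q) • uvec + q • zvec
      conv_rhs => rw [hz_def, smul_sub, hqt]
      rw [add_sub_assoc]
    -- norm bounds
    have hA1 : ‖Uu i‖ ^ 2 ≤ (1 - q) * ‖uvec‖ ^ 2 + q * ‖zvec‖ ^ 2 := by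
      rw [hdecomp]
      exact adsaga_aux_combo q hq0.le hq1 uvec zvec
    have hA2 : ‖zvec‖ ^ 2 ≤ 2 * ‖avec - bvec‖ ^ 2 + 2 * (t ^ 2 * ‖hvecj‖ ^ 2) := by
      have := adsaga_aux_sub (avec - bvec) (t • hvecj)
      have hts : ‖t • hvecj‖ ^ 2 = t ^ 2 * ‖hvecj‖ ^ 2 := by
        rw [norm_smul, Real.norm_eq_abs, mul_pow, sq_abs]
      rw [hz_def]
      linarith [this, hts.le, hts.ge]
    have hGi : G i = ‖avec - gradf i xstar‖ ^ 2 := by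
      simp only [hG_def, ha_def]
    have hA3 : ‖avec - bvec‖ ^ 2 ≤ 2 * G i + 2 * E i := by
      by_cases hcase : i = S.idx j
      · have hb : bvec = S.g j := by rw [hb_def, if_pos hcase]
        have hE : E i = ‖S.g j - gradf i xstar‖ ^ 2 := by
          simp only [hE_def, ← hj_def, if_pos hcase, hGs_def]
          rw [← hcase]
        rw [hb, hGi, hE]
        exact adsaga_aux_sub3 avec (S.g j) (gradf i xstar)
      · have hb : bvec = S.alpha i := by rw [hb_def, if_neg hcase]
        have hE : E i = ‖S.alpha i - gradf i xstar‖ ^ 2 := by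
          simp only [hE_def, ← hj_def, if_neg hcase, hA_def]
        rw [hb, hGi, hE]
        exact adsaga_aux_sub3 avec (S.alpha i) (gradf i xstar)
    have hA4 : ‖hvecj‖ ^ 2 ≤ 2 * Gs j + 2 * Bs j := by
      simp only [hGs_def, hBs_def, hh_def, AdsagaState.hvec]
      exact adsaga_aux_sub3 (S.g j) (S.beta j) (gradf (S.idx j) xstar)
    -- coefficient identities
    have e1 : pj * q = pmin := by
      rw [hq_def]; field_simp
    have e2 : pmin * t ^ 2 = s ^ 2 * (1 - q) ^ 2 * (pj ^ 2 / pmin) := by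
      rw [ht_def, hq_def]
      field_simp
    have e3 : s ^ 3 * (1 - q) ^ 2 ≤ s ^ 2 := by
      have ha1 : (0:ℝ) ≤ 1 - q := by linarith
      have hb1 : (1:ℝ) - q ≤ 1 := by linarith
      have h1 : (1 - q) ^ 2 ≤ 1 := pow_le_one₀ ha1 hb1
      have h2 : s ^ 3 ≤ s ^ 2 := pow_le_pow_of_le_one hs0.le hs1 (by norm_num)
      calc s ^ 3 * (1 - q) ^ 2 ≤ s ^ 3 * 1 :=
            mul_le_mul_of_nonneg_left h1 (pow_nonneg hs0.le 3)
        _ = s ^ 3 := by ring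
        _ ≤ s ^ 2 := h2
    -- combine
    have H1 : pj * s * ‖Uu i‖ ^ 2
        ≤ pj * s * ‖uvec‖ ^ 2 - pmin * s * ‖uvec‖ ^ 2 + pmin * s * ‖zvec‖ ^ 2 := by
      have h := mul_le_mul_of_nonneg_left hA1
        (show (0:ℝ) ≤ pj * s from mul_nonneg hpj0.le hs0.le)
      have heq : pj * s * ((1 - q) * ‖uvec‖ ^ 2 + q * ‖zvec‖ ^ 2)
          = pj * s * ‖uvec‖ ^ 2 - (pj * q) * s * ‖uvec‖ ^ 2
            + (pj * q) * s * ‖zvec‖ ^ 2 := by ring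
      rw [heq, e1] at h
      linarith
    have H2 : pmin * s * ‖zvec‖ ^ 2
        ≤ 2 * s * pmin * ‖avec - bvec‖ ^ 2 + 2 * s * (pmin * t ^ 2) * ‖hvecj‖ ^ 2 := by
      have h := mul_le_mul_of_nonneg_left hA2
        (show (0:ℝ) ≤ pmin * s from mul_nonneg hpmin0.le hs0.le)
      have heq : pmin * s * (2 * ‖avec - bvec‖ ^ 2 + 2 * (t ^ 2 * ‖hvecj‖ ^ 2))
          = 2 * s * pmin * ‖avec - bvec‖ ^ 2 + 2 * s * (pmin * t ^ 2) * ‖hvecj‖ ^ 2 := by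
        ring
      linarith
    have H3 : 2 * s * pmin * ‖avec - bvec‖ ^ 2 ≤ 4 * s * pmin * (G i + E i) := by
      have h := mul_le_mul_of_nonneg_left hA3
        (show (0:ℝ) ≤ 2 * s * pmin from
          mul_nonneg (mul_nonneg (by norm_num) hs0.le) hpmin0.le)
      have heq : 2 * s * pmin * (2 * G i + 2 * E i) = 4 * s * pmin * (G i + E i) := by ring
      linarith
    have H4 : 2 * s * (pmin * t ^ 2) * ‖hvecj‖ ^ 2 ≤ s * K j := by
      have hnn : (0:ℝ) ≤ 2 * s * (pmin * t ^ 2) :=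
        mul_nonneg (mul_nonneg (by norm_num) hs0.le) (mul_nonneg hpmin0.le (sq_nonneg t))
      have h := mul_le_mul_of_nonneg_left hA4 hnn
      have heq : 2 * s * (pmin * t ^ 2) * (2 * Gs j + 2 * Bs j)
          = 4 * (s ^ 3 * (1 - q) ^ 2) * (pj ^ 2 / pmin) * (Gs j + Bs j) := by
        rw [e2]; ring
      rw [heq] at h
      have hKj : s * K j = 4 * s ^ 2 * (pj ^ 2 / pmin) * (Gs j + Bs j) := by
        rw [hK_def]; ring
      rw [hKj]
      have hfac : 4 * (s ^ 3 * (1 - q) ^ 2) * (pj ^ 2 / pmin) * (Gs j + Bs j)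
          ≤ 4 * s ^ 2 * (pj ^ 2 / pmin) * (Gs j + Bs j) := by
        apply mul_le_mul_of_nonneg_right _ (add_nonneg (hGsnn j) (hBsnn j))
        apply mul_le_mul_of_nonneg_right _ (div_nonneg (sq_nonneg pj) hpmin0.le)
        linarith [e3]
      linarith
    linarith [H1, H2, H3, H4]
  -- sum identities
  have hsum_u : ∑ i, pmin * s * ‖S.u (J i)‖ ^ 2 = pmin * ∑ j, ‖S.u j‖ ^ 2 := by
    have h := fiber (fun j => ‖S.u j‖ ^ 2)
    calc ∑ i, pmin * s * ‖S.u (J i)‖ ^ 2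
        = pmin * s * ∑ i, ‖S.u (J i)‖ ^ 2 := by rw [Finset.mul_sum]
      _ = pmin * s * (((n:ℝ)/(m:ℝ)) * ∑ j, ‖S.u j‖ ^ 2) := by rw [h]
      _ = pmin * ∑ j, ‖S.u j‖ ^ 2 := by
          rw [hs_def]; field_simp
  have hsum_K : ∑ i, s * K (J i) = ∑ j, K j := by
    have h := fiber K
    calc ∑ i, s * K (J i) = s * ∑ i, K (J i) := by rw [Finset.mul_sum]
      _ = s * (((n:ℝ)/(m:ℝ)) * ∑ j, K j) := by rw [h]
      _ = ∑ j, K j := by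
          rw [hs_def]; field_simp
  have idxsum : ∑ i, (if i = S.idx (J i) then Gs (J i) else 0) = ∑ j, Gs j := by
    rw [← Finset.sum_filter]
    refine Finset.sum_nbij' (fun i => J i) (fun j => S.idx j)
      (fun a _ => Finset.mem_univ _) (fun a _ => ?_) (fun a ha => ?_)
      (fun a _ => hidx a) (fun a _ => rfl)
    · simp only [Finset.mem_filter, Finset.mem_univ, true_and]
      rw [hidx a]
    · exact ((Finset.mem_filter.1 ha).2).symm
  have hsum_E : ∑ i, 4 * s * pmin * (G i + E i)
      ≤ (4 * (m:ℝ) * pmin / n) * (∑ i, (G i + A i)) + 4 * s * pmin * ∑ j, Gs j := by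
    have hpt : ∀ i, E i ≤ A i + (if i = S.idx (J i) then Gs (J i) else 0) := by
      intro i
      rw [hE_def]
      by_cases hcase : i = S.idx (J i)
      · simp only [if_pos hcase]
        linarith [hAnn i]
      · simp only [if_neg hcase]
        linarith
    have h1 : (∑ i, (G i + E i)) ≤ (∑ i, (G i + A i)) + ∑ j, Gs j := by
      calc ∑ i, (G i + E i)
          ≤ ∑ i, ((G i + A i) + (if i = S.idx (J i) then Gs (J i) else 0)) :=
            Finset.sum_le_sum (fun i _ => by linarith [hpt i])
        _ = (∑ i, (G i + A i)) + ∑ i, (if i = S.idx (J i) then Gs (J i) else 0) :=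
            Finset.sum_add_distrib
        _ = (∑ i, (G i + A i)) + ∑ j, Gs j := by rw [idxsum]
    have hnn : (0:ℝ) ≤ 4 * s * pmin :=
      mul_nonneg (mul_nonneg (by norm_num) hs0.le) hpmin0.le
    calc ∑ i, 4 * s * pmin * (G i + E i)
        = 4 * s * pmin * ∑ i, (G i + E i) := by rw [Finset.mul_sum]
      _ ≤ 4 * s * pmin * ((∑ i, (G i + A i)) + ∑ j, Gs j) :=
          mul_le_mul_of_nonneg_left h1 hnn
      _ = (4 * (m:ℝ) * pmin / n) * (∑ i, (G i + A i)) + 4 * s * pmin * ∑ j, Gs j := by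
          rw [hs_def]; ring
  have hfinal_j : ∀ j, 4 * s * pmin * Gs j + K j
      ≤ (16 * (m:ℝ) / ((n:ℝ) * pmin)) * (p j ^ 2 * (Gs j + Bs j)) := by
    intro j
    have hw : pmin ≤ p j ^ 2 / pmin := by
      rw [le_div_iff₀ hpmin0]
      nlinarith [hple j, hpmin0]
    have hrhs : (16 * (m:ℝ) / ((n:ℝ) * pmin)) * (p j ^ 2 * (Gs j + Bs j))
        = 16 * s * (p j ^ 2 / pmin) * (Gs j + Bs j) := by
      rw [hs_def]; field_simp
    rw [hrhs, hK_def]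
    have h1 : 4 * s * pmin * Gs j ≤ 4 * s * (p j ^ 2 / pmin) * Gs j := by
      apply mul_le_mul_of_nonneg_right _ (hGsnn j)
      have := mul_le_mul_of_nonneg_left hw (show (0:ℝ) ≤ 4 * s from
        mul_nonneg (by norm_num) hs0.le)
      linarith
    have hwn : (0:ℝ) ≤ p j ^ 2 / pmin := div_nonneg (sq_nonneg (p j)) hpmin0.le
    have h2 : (0:ℝ) ≤ s * (p j ^ 2 / pmin) * Gs j :=
      mul_nonneg (mul_nonneg hs0.le hwn) (hGsnn j)
    have h3 : (0:ℝ) ≤ s * (p j ^ 2 / pmin) * Bs j :=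
      mul_nonneg (mul_nonneg hs0.le hwn) (hBsnn j)
    linarith
  -- main sum bound
  have core : ∑ i, p (J i) * s * (‖Uu i‖ ^ 2 - ‖S.u (J i)‖ ^ 2)
      ≤ -(pmin * ∑ j, ‖S.u j‖ ^ 2)
        + (4 * (m:ℝ) * pmin / n) * (∑ i, (G i + A i))
        + (16 * (m:ℝ) / ((n:ℝ) * pmin)) * (∑ j, p j ^ 2 * (Gs j + Bs j)) := by
    have h1 : ∑ i, p (J i) * s * (‖Uu i‖ ^ 2 - ‖S.u (J i)‖ ^ 2)
        ≤ ∑ i, (-(pmin * s * ‖S.u (J i)‖ ^ 2) + 4 * s * pmin * (G i + E i) + s * K (J i)) :=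
      Finset.sum_le_sum (fun i _ => claim i)
    rw [Finset.sum_add_distrib, Finset.sum_add_distrib, Finset.sum_neg_distrib] at h1
    rw [hsum_u, hsum_K] at h1
    have h2 := hsum_E
    have h3 : ∑ j, (4 * s * pmin * Gs j + K j)
        ≤ ∑ j, (16 * (m:ℝ) / ((n:ℝ) * pmin)) * (p j ^ 2 * (Gs j + Bs j)) :=
      Finset.sum_le_sum (fun j _ => hfinal_j j)
    rw [Finset.sum_add_distrib, ← Finset.mul_sum, ← Finset.mul_sum] at h3
    linarith
  -- assemble
  have hlhs : (∑ i : Fin n, p (J i) * ((m : ℝ) / n)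
        * phi5 η c5 (AdsagaState.step gradf p pmin η S (J i) i)) - phi5 η c5 S
      = η ^ 2 * c5 * ∑ i, p (J i) * s * (‖Uu i‖ ^ 2 - ‖S.u (J i)‖ ^ 2) := by
    have h1 : ∀ i : Fin n, p (J i) * ((m : ℝ) / n)
        * phi5 η c5 (AdsagaState.step gradf p pmin η S (J i) i)
        = p (J i) * s * (η ^ 2 * c5 * (∑ j, ‖S.u j‖ ^ 2))
          + η ^ 2 * c5 * (p (J i) * s * (‖Uu i‖ ^ 2 - ‖S.u (J i)‖ ^ 2)) := by
      intro i
      rw [hphi5step i, hs_def]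
      ring
    rw [Finset.sum_congr rfl (fun i _ => h1 i), Finset.sum_add_distrib,
      ← Finset.sum_mul, sumOne, ← Finset.mul_sum, phi5]
    ring
  rw [hlhs]
  calc η ^ 2 * c5 * ∑ i, p (J i) * s * (‖Uu i‖ ^ 2 - ‖S.u (J i)‖ ^ 2)
      ≤ η ^ 2 * c5 * (-(pmin * ∑ j, ‖S.u j‖ ^ 2)
          + (4 * (m:ℝ) * pmin / n) * (∑ i, (G i + A i))
          + (16 * (m:ℝ) / ((n:ℝ) * pmin)) * (∑ j, p j ^ 2 * (Gs j + Bs j))) := by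
        apply mul_le_mul_of_nonneg_left core (mul_nonneg (sq_nonneg η) hc5pos.le)
    _ = c5 * η ^ 2 *
          (-(pmin * ∑ j, ‖S.u j‖ ^ 2)
            + (4 * (m : ℝ) * pmin / n) *
                (∑ i, (‖gradf i S.x - gradf i xstar‖ ^ 2 + ‖S.alpha i - gradf i xstar‖ ^ 2))
            + (16 * (m : ℝ) / (n * pmin)) *
                (∑ j, (p j) ^ 2 *
                  (‖S.g j - gradf (S.idx j) xstar‖ ^ 2
                    + ‖S.beta j - gradf (S.idx j) xstar‖ ^ 2))) := by
        rw [hG_def, hA_def, hGs_def, hBs_def]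
        ring
end
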